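/- arXiv:math/0703341 — 8 statements merged into one kernel-verified Lean document; each statement's English description precedes it below -/
import Mathlib

section
/- The function Ψ_x(u,v) = ∫_{ℝ^d × ℝ^q} (e^{(⟨u,y⟩+v)K(z)} − 1) f(x,y) dz dy is strictly convex on ℝ^q × ℝ. -/
open MeasureTheory Real Set

/-!
The integrand is `φ(ℓ_{z,y}(w)) f(x,y)` with `φ t = e^t - 1` strictly convex, `f(x,y) ≥ 0` and
`ℓ_{z,y}(u,v) = (⟪u,y⟫ + v) K(z)` linear in `w = (u,v)`. Hence the convexity gap of `Ψ_x` between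
`w ≠ w'` is the integral of a nonnegative function that is positive wherever `f(x,y) ≠ 0` and
`ℓ_{z,y}(w - w') ≠ 0`. That set contains `{K ≠ 0} × ({f(x,·) ≠ 0} \ H)`, where `H` is the affine
hyperplane `⟪u,y⟫ + v = 0` for `(u,v) = w - w' ≠ 0`; since `H` is Lebesgue-null, this product has
positive measure.
-/

section StrictConvexIntegral

variable {α E : Type*} [MeasurableSpace α] {μ : Measure α} [AddCommGroup E] [Module ℝ E]
  {φ : ℝ → ℝ} {ℓ : α → E →ₗ[ℝ] ℝ} {c : α → ℝ}

theorem StrictConvexOn.integral_comp_linearMap_mul (hφ : StrictConvexOn ℝ univ φ)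
    (hc : ∀ p, 0 ≤ c p) (hint : ∀ w, Integrable (fun p => φ (ℓ p w) * c p) μ)
    (hsupp : ∀ w ≠ 0, μ {p | c p ≠ 0 ∧ ℓ p w ≠ 0} ≠ 0) :
    StrictConvexOn ℝ univ (fun w => ∫ p, φ (ℓ p w) * c p ∂μ) := by
  refine ⟨convex_univ, fun w _ w' _ hne a b ha hb hab => ?_⟩
  have hℓ : ∀ p, ℓ p (a • w + b • w') = a * ℓ p w + b * ℓ p w' := fun p => by
    simp only [map_add, map_smul, smul_eq_mul]
  set gap : α → ℝ := fun p => (a * φ (ℓ p w) + b * φ (ℓ p w') - φ (ℓ p (a • w + b • w'))) * c p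
  have hgap_nonneg : 0 ≤ gap := fun p => by
    have := hφ.convexOn.2 (mem_univ (ℓ p w)) (mem_univ (ℓ p w')) ha.le hb.le hab
    simp only [smul_eq_mul] at this
    exact mul_nonneg (by rw [hℓ]; linarith) (hc p)
  have hgap_pos : {p | c p ≠ 0 ∧ ℓ p (w - w') ≠ 0} ⊆ Function.support gap := by
    rintro p ⟨hcp, hℓp⟩
    rw [map_sub, sub_ne_zero] at hℓp
    have := hφ.2 (mem_univ (ℓ p w)) (mem_univ (ℓ p w')) hℓp ha hb hab
    simp only [smul_eq_mul] at this
    exact (mul_pos (by rw [hℓ]; linarith) (lt_of_le_of_ne (hc p) (Ne.symm hcp))).ne'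
  have hint_comb : Integrable (fun p => a * (φ (ℓ p w) * c p) + b * (φ (ℓ p w') * c p)) μ :=
    ((hint w).const_mul a).add ((hint w').const_mul b)
  have hgap_eq : gap = fun p => a * (φ (ℓ p w) * c p) + b * (φ (ℓ p w') * c p)
      - φ (ℓ p (a • w + b • w')) * c p := by
    ext p; ring
  have hgap_int : 0 < ∫ p, gap p ∂μ := by
    rw [integral_pos_iff_support_of_nonneg hgap_nonneg (hgap_eq ▸ hint_comb.sub (hint _))]
    exact (pos_iff_ne_zero.2 (hsupp _ (sub_ne_zero.2 hne))).trans_le (measure_mono hgap_pos)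
  rw [hgap_eq, integral_sub hint_comb (hint _), integral_add ((hint w).const_mul a)
    ((hint w').const_mul b), integral_const_mul, integral_const_mul] at hgap_int
  simp only [smul_eq_mul]
  linarith

end StrictConvexIntegral

theorem AffineMap.addHaar_preimage_singleton {E F : Type*} [NormedAddCommGroup E]
    [NormedSpace ℝ E] [MeasurableSpace E] [BorelSpace E] [FiniteDimensional ℝ E]
    [AddCommGroup F] [Module ℝ F] (μ : Measure E) [μ.IsAddHaarMeasure] (A : E →ᵃ[ℝ] F) {c : F}
    (h : ∃ y, A y ≠ c) : μ (A ⁻¹' {c}) = 0 := by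
  have hne : (affineSpan ℝ {c}).comap A ≠ ⊤ := by
    obtain ⟨y, hy⟩ := h
    intro htop
    have hy_mem : y ∈ (affineSpan ℝ {c}).comap A := htop ▸ AffineSubspace.mem_top ℝ E y
    exact hy ((AffineSubspace.mem_affineSpan_singleton ℝ F).1 hy_mem)
  simpa [AffineSubspace.coe_comap, AffineSubspace.coe_affineSpan_singleton] using
    Measure.addHaar_affineSubspace μ _ hne

section InnerProduct

variable {F : Type*} [NormedAddCommGroup F] [InnerProductSpace ℝ F]

def innerAddMul (y : F) (k : ℝ) : (F × ℝ) →ₗ[ℝ] ℝ where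
  toFun w := (inner ℝ w.1 y + w.2) * k
  map_add' w w' := by
    simp only [Prod.fst_add, Prod.snd_add, inner_add_left]
    ring
  map_smul' r w := by
    simp only [Prod.smul_fst, Prod.smul_snd, real_inner_smul_left, smul_eq_mul, RingHom.id_apply]
    ring

variable [FiniteDimensional ℝ F] [MeasurableSpace F] [BorelSpace F]

theorem addHaar_setOf_inner_add_eq_zero (ν : Measure F) [ν.IsAddHaarMeasure] {u : F} {v : ℝ}
    (huv : (u, v) ≠ 0) : ν {y | inner ℝ u y + v = 0} = 0 := by
  let A : F →ᵃ[ℝ] ℝ := (innerₛₗ ℝ u).toAffineMap + AffineMap.const ℝ F v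
  have hA : ∀ y, A y = inner ℝ u y + v := fun y => rfl
  refine A.addHaar_preimage_singleton ν ?_
  by_cases hv : v = 0
  · have hu : u ≠ 0 := fun hu => huv (by simp [hu, hv])
    exact ⟨u, by simpa [hA, hv] using hu⟩
  · exact ⟨0, by simpa [hA] using hv⟩

theorem measure_prod_setOf_innerAddMul_ne_zero {Z : Type*} [MeasurableSpace Z] {μ : Measure Z}
    {ν : Measure F} [ν.IsAddHaarMeasure] {K : Z → ℝ} {g : F → ℝ}
    (hK : μ (Function.support K) ≠ 0) (hg : ν (Function.support g) ≠ 0) {w : F × ℝ}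
    (hw : w ≠ 0) : μ.prod ν {p | g p.2 ≠ 0 ∧ innerAddMul p.2 (K p.1) w ≠ 0} ≠ 0 := by
  have hsub : Function.support K ×ˢ (Function.support g \ {y | inner ℝ w.1 y + w.2 = 0}) ⊆
      {p | g p.2 ≠ 0 ∧ innerAddMul p.2 (K p.1) w ≠ 0} := by
    rintro ⟨z, y⟩ ⟨hKz, hgy, hy⟩
    exact ⟨hgy, mul_ne_zero hy hKz⟩
  intro h
  have h0 := measure_mono_null hsub h
  rw [Measure.prod_prod, measure_sdiff_null (addHaar_setOf_inner_add_eq_zero ν hw)] at h0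
  exact mul_ne_zero hK hg h0

end InnerProduct

theorem stmt3_general (d q : ℕ)
    (K : EuclideanSpace ℝ (Fin d) → ℝ)
    (f : EuclideanSpace ℝ (Fin d) → EuclideanSpace ℝ (Fin q) → ℝ)
    (x : EuclideanSpace ℝ (Fin d))
    (hKne : volume {z | K z ≠ 0} ≠ 0)
    (hfnn : ∀ y, 0 ≤ f x y)
    (hfprob : ∫ y, f x y = 1)
    (hint : ∀ (u : EuclideanSpace ℝ (Fin q)) (v : ℝ),
      Integrable (fun p : EuclideanSpace ℝ (Fin d) × EuclideanSpace ℝ (Fin q) =>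
        (Real.exp (((inner ℝ u p.2 : ℝ) + v) * K p.1) - 1) * f x p.2)) :
    StrictConvexOn ℝ Set.univ
      (fun w : EuclideanSpace ℝ (Fin q) × ℝ =>
        ∫ p : EuclideanSpace ℝ (Fin d) × EuclideanSpace ℝ (Fin q),
          (Real.exp (((inner ℝ w.1 p.2 : ℝ) + w.2) * K p.1) - 1) * f x p.2) := by
  have hf_supp : volume (Function.support (f x)) ≠ 0 := fun h =>
    one_ne_zero (hfprob ▸ integral_eq_zero_of_ae ((Measure.measure_support_eq_zero_iff _).1 h))
  have hφ : StrictConvexOn ℝ univ (fun t => exp t - 1) :=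
    strictConvexOn_exp.sub_concaveOn (concaveOn_const 1 convex_univ)
  refine hφ.integral_comp_linearMap_mul
    (ℓ := fun p : EuclideanSpace ℝ (Fin d) × EuclideanSpace ℝ (Fin q) => innerAddMul p.2 (K p.1))
    (fun p => hfnn p.2) (fun w => hint w.1 w.2) fun w hw => ?_
  rw [Measure.volume_eq_prod]
  exact measure_prod_setOf_innerAddMul_ne_zero hKne hf_supp hw

/-- Strict convexity of `Ψ_x(u,v) = ∫ (e^{(⟨u,y⟩+v)K(z)} - 1) f(x,y) dz dy` on `ℝ^q × ℝ`. -/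
theorem stmt3 (d q : ℕ)
    (K : EuclideanSpace ℝ (Fin d) → ℝ)
    (f : EuclideanSpace ℝ (Fin d) → EuclideanSpace ℝ (Fin q) → ℝ)
    (x : EuclideanSpace ℝ (Fin d))
    (hKmeas : Measurable K) (hKbdd : ∃ M : ℝ, ∀ z, |K z| ≤ M)
    (hKint : Integrable K) (hK1 : ∫ z, K z = 1)
    (hKne : volume {z | K z ≠ 0} ≠ 0)
    (hfmeas : Measurable (f x)) (hfnn : ∀ y, 0 ≤ f x y)
    (hfprob : ∫ y, f x y = 1)
    (hmom : ∀ (m ρ : ℝ), 0 ≤ m → 0 ≤ ρ →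
      Integrable (fun y : EuclideanSpace ℝ (Fin q) =>
        ‖y‖ ^ m * Real.exp (ρ * ‖y‖) * f x y))
    (hint : ∀ (u : EuclideanSpace ℝ (Fin q)) (v : ℝ),
      Integrable (fun p : EuclideanSpace ℝ (Fin d) × EuclideanSpace ℝ (Fin q) =>
        (Real.exp (((inner ℝ u p.2 : ℝ) + v) * K p.1) - 1) * f x p.2)) :
    StrictConvexOn ℝ Set.univ
      (fun w : EuclideanSpace ℝ (Fin q) × ℝ =>
        ∫ p : EuclideanSpace ℝ (Fin d) × EuclideanSpace ℝ (Fin q),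
          (Real.exp (((inner ℝ w.1 p.2 : ℝ) + w.2) * K p.1) - 1) * f x p.2) :=
  stmt3_general d q K f x hKne hfnn hfprob hint
end

section
/- The function Ψ_x is continuously differentiable on ℝ^q × ℝ, with gradient ∇Ψ_x(u,v) = (∫ y e^{(⟨u,y⟩+v)K(z)} K(z) f(x,y) dz dy, ∫ e^{(⟨u,y⟩+v)K(z)} K(z) f(x,y) dz dy). -/
/-!
Differentiation under the integral sign. If `|K| ≤ M` and `‖(u, v)‖ ≤ R`, the derivative in
`(u, v)` of the integrand of `Ψ_x` is dominated by
`e^{RM} |K(z)| (‖y‖ + 1) e^{RM‖y‖} f(x, y)`, which is integrable because `K` is integrable and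
`f(x, ·)` has exponential moments. Such domination on bounded sets already yields, through the
mean value theorem, integrability of the integrand for every parameter (it vanishes at `0`),
differentiability of the integral with the integral of the derivative as derivative, and, by
dominated convergence, continuity of that derivative.
-/

open MeasureTheory Real Filter Metric

section ParametricIntegral

variable {α E H : Type*} [MeasurableSpace α] {μ : Measure α}
  [NormedAddCommGroup E] [NormedAddCommGroup H]

def DominatedOnBounded (F : E → α → H) (μ : Measure α) : Prop :=
  ∀ R : ℝ, ∃ bound : α → ℝ, Integrable bound μ ∧ ∀ᵐ a ∂μ, ∀ w, ‖w‖ ≤ R → ‖F w a‖ ≤ bound a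

namespace DominatedOnBounded

variable {F : E → α → H}

theorem integrable (hF : DominatedOnBounded F μ) {w : E}
    (hF_meas : AEStronglyMeasurable (F w) μ) : Integrable (F w) μ := by
  obtain ⟨bound, hbound_int, hbound⟩ := hF ‖w‖
  exact hbound_int.mono' hF_meas (hbound.mono fun a ha => ha w le_rfl)

theorem exists_bound_on_ball (hF : DominatedOnBounded F μ) (w : E) :
    ∃ bound : α → ℝ, Integrable bound μ ∧ ∀ᵐ a ∂μ, ∀ v ∈ ball w 1, ‖F v a‖ ≤ bound a := by
  obtain ⟨bound, hbound_int, hbound⟩ := hF (‖w‖ + 1)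
  refine ⟨bound, hbound_int, hbound.mono fun a ha v hv => ha v ?_⟩
  have hv : ‖v - w‖ < 1 := mem_ball_iff_norm.1 hv
  linarith [norm_le_norm_add_norm_sub' v w]

theorem continuous_integral [NormedSpace ℝ H] (hF : DominatedOnBounded F μ)
    (hF_meas : ∀ w, AEStronglyMeasurable (F w) μ) (hF_cont : ∀ᵐ a ∂μ, Continuous (F · a)) :
    Continuous fun w => ∫ a, F w a ∂μ := by
  refine continuous_iff_continuousAt.2 fun w => ?_
  obtain ⟨bound, hbound_int, hbound⟩ := hF.exists_bound_on_ball w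
  refine continuousAt_of_dominated (Eventually.of_forall hF_meas) ?_ hbound_int
    (hF_cont.mono fun a ha => ha.continuousAt)
  filter_upwards [ball_mem_nhds w one_pos] with v hv
  exact hbound.mono fun a ha => ha v hv

end DominatedOnBounded

variable [NormedSpace ℝ E] [NormedSpace ℝ H] {F : E → α → H} {F' : E → α → E →L[ℝ] H}

theorem integrable_of_hasFDerivAt_of_dominatedOnBounded
    (hF_meas : ∀ w, AEStronglyMeasurable (F w) μ) {w₀ : E} (hF_int : Integrable (F w₀) μ)
    (hF' : ∀ᵐ a ∂μ, ∀ w, HasFDerivAt (F · a) (F' w a) w) (hF'_dom : DominatedOnBounded F' μ)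
    (w : E) : Integrable (F w) μ := by
  obtain ⟨bound, hbound_int, hbound⟩ := hF'_dom (max ‖w₀‖ ‖w‖)
  have hsub : Integrable (fun a => F w a - F w₀ a) μ := by
    refine (hbound_int.mul_const ‖w - w₀‖).mono' ((hF_meas w).sub (hF_meas w₀)) ?_
    filter_upwards [hF', hbound] with a ha hba
    exact (convex_closedBall (0 : E) _).norm_image_sub_le_of_norm_hasFDerivWithin_le
      (fun v _ => (ha v).hasFDerivWithinAt) (fun v hv => hba v (mem_closedBall_zero_iff.1 hv))
      (mem_closedBall_zero_iff.2 (le_max_left _ _)) (mem_closedBall_zero_iff.2 (le_max_right _ _))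
  exact (hsub.add hF_int).congr (.of_forall fun a => sub_add_cancel (F w a) (F w₀ a))

theorem hasFDerivAt_integral_of_dominatedOnBounded
    (hF_meas : ∀ w, AEStronglyMeasurable (F w) μ) {w₀ : E} (hF_int : Integrable (F w₀) μ)
    (hF'_meas : ∀ w, AEStronglyMeasurable (F' w) μ)
    (hF' : ∀ᵐ a ∂μ, ∀ w, HasFDerivAt (F · a) (F' w a) w) (hF'_dom : DominatedOnBounded F' μ)
    (w : E) : HasFDerivAt (fun w => ∫ a, F w a ∂μ) (∫ a, F' w a ∂μ) w := by
  obtain ⟨bound, hbound_int, hbound⟩ := hF'_dom.exists_bound_on_ball w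
  exact hasFDerivAt_integral_of_dominated_of_fderiv_le (ball_mem_nhds w one_pos)
    (Eventually.of_forall hF_meas)
    (integrable_of_hasFDerivAt_of_dominatedOnBounded hF_meas hF_int hF' hF'_dom w)
    (hF'_meas w) hbound hbound_int (hF'.mono fun a ha v _ => ha v)

theorem contDiff_one_integral_of_dominatedOnBounded
    (hF_meas : ∀ w, AEStronglyMeasurable (F w) μ) {w₀ : E} (hF_int : Integrable (F w₀) μ)
    (hF'_meas : ∀ w, AEStronglyMeasurable (F' w) μ)
    (hF' : ∀ᵐ a ∂μ, ∀ w, HasFDerivAt (F · a) (F' w a) w) (hF'_cont : ∀ᵐ a ∂μ, Continuous (F' · a))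
    (hF'_dom : DominatedOnBounded F' μ) :
    ContDiff ℝ 1 fun w => ∫ a, F w a ∂μ := by
  have hderiv :=
    hasFDerivAt_integral_of_dominatedOnBounded hF_meas hF_int hF'_meas hF' hF'_dom
  refine contDiff_one_iff_fderiv.2 ⟨fun w => (hderiv w).differentiableAt, ?_⟩
  rw [funext fun w => (hderiv w).fderiv]
  exact hF'_dom.continuous_integral hF'_meas hF'_cont

end ParametricIntegral

section ExponentialIntegrand

open scoped RealInnerProductSpace

variable {Z V : Type*} [NormedAddCommGroup V] [InnerProductSpace ℝ V]

noncomputable def innerAddCLM (y : V) : V × ℝ →L[ℝ] ℝ :=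
  (innerSL ℝ y).comp (ContinuousLinearMap.fst ℝ V ℝ) + ContinuousLinearMap.snd ℝ V ℝ

theorem innerAddCLM_apply (y : V) (w : V × ℝ) : innerAddCLM y w = ⟪w.1, y⟫ + w.2 := by
  simp [innerAddCLM, real_inner_comm]

theorem norm_innerAddCLM_le (y : V) : ‖innerAddCLM y‖ ≤ ‖y‖ + 1 := by
  refine ContinuousLinearMap.opNorm_le_bound _ (by positivity) fun w => ?_
  rw [innerAddCLM_apply, norm_eq_abs]
  calc |⟪w.1, y⟫ + w.2| ≤ ‖w.1‖ * ‖y‖ + ‖w.2‖ :=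
        (abs_add_le _ _).trans (add_le_add (abs_real_inner_le_norm _ _) le_rfl)
    _ ≤ ‖w‖ * ‖y‖ + ‖w‖ :=
        add_le_add (mul_le_mul_of_nonneg_right (norm_fst_le w) (norm_nonneg y)) (norm_snd_le w)
    _ = (‖y‖ + 1) * ‖w‖ := by ring

theorem continuous_innerAddCLM : Continuous (innerAddCLM (V := V)) :=
  ((innerSL ℝ).continuous.clm_comp continuous_const).add continuous_const

/-- `∫ p, expIntegrand K (f x) (u, v) p` is `Ψ_x(u, v)`, with `p = (z, y)`. -/
noncomputable def expIntegrand (K : Z → ℝ) (g : V → ℝ) (w : V × ℝ) (p : Z × V) : ℝ :=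
  (exp ((⟪w.1, p.2⟫ + w.2) * K p.1) - 1) * g p.2

noncomputable def expIntegrandFDeriv (K : Z → ℝ) (g : V → ℝ) (w : V × ℝ) (p : Z × V) :
    V × ℝ →L[ℝ] ℝ :=
  (exp ((⟪w.1, p.2⟫ + w.2) * K p.1) * K p.1 * g p.2) • innerAddCLM p.2

variable {K : Z → ℝ} {g : V → ℝ}

theorem hasFDerivAt_expIntegrand (w : V × ℝ) (p : Z × V) :
    HasFDerivAt (expIntegrand K g · p) (expIntegrandFDeriv K g w p) w := by
  have hlin : HasFDerivAt (fun w : V × ℝ => ⟪w.1, p.2⟫ + w.2) (innerAddCLM p.2) w := by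
    convert (innerAddCLM p.2).hasFDerivAt using 1
    exact funext fun w => (innerAddCLM_apply p.2 w).symm
  refine ((((hlin.mul_const (K p.1)).exp).sub_const 1).mul_const (g p.2)).congr_fderiv ?_
  rw [expIntegrandFDeriv, smul_smul, smul_smul]
  congr 1
  ring

theorem continuous_expIntegrandFDeriv (p : Z × V) :
    Continuous (expIntegrandFDeriv K g · p) := by
  unfold expIntegrandFDeriv
  fun_prop

theorem expIntegrand_zero : expIntegrand K g 0 = 0 := by
  ext p
  simp [expIntegrand]

theorem expIntegrandFDeriv_apply (w w' : V × ℝ) (p : Z × V) :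
    expIntegrandFDeriv K g w p w' =
      (⟪w'.1, p.2⟫ + w'.2) * exp ((⟪w.1, p.2⟫ + w.2) * K p.1) * K p.1 * g p.2 := by
  rw [expIntegrandFDeriv, smul_apply, innerAddCLM_apply, smul_eq_mul]
  ring

theorem norm_expIntegrandFDeriv_le {M R : ℝ} (hM : ∀ z, |K z| ≤ M) (hg : ∀ y, 0 ≤ g y)
    {w : V × ℝ} (hw : ‖w‖ ≤ R) (p : Z × V) :
    ‖expIntegrandFDeriv K g w p‖ ≤
      exp (R * M) * (|K p.1| * ((‖p.2‖ + 1) * exp (R * M * ‖p.2‖) * g p.2)) := by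
  have hlin : |innerAddCLM p.2 w| ≤ (‖p.2‖ + 1) * R :=
    ((innerAddCLM p.2).le_opNorm w).trans
      (mul_le_mul (norm_innerAddCLM_le p.2) hw (norm_nonneg w) (by positivity))
  have hexponent : (⟪w.1, p.2⟫ + w.2) * K p.1 ≤ R * M + R * M * ‖p.2‖ := by
    rw [← innerAddCLM_apply]
    calc _ ≤ |innerAddCLM p.2 w| * |K p.1| := (le_abs_self _).trans (abs_mul _ _).le
      _ ≤ (‖p.2‖ + 1) * R * M :=
          mul_le_mul hlin (hM p.1) (abs_nonneg _) ((abs_nonneg _).trans hlin)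
      _ = R * M + R * M * ‖p.2‖ := by ring
  have hgp := hg p.2
  calc ‖expIntegrandFDeriv K g w p‖
      ≤ ‖exp ((⟪w.1, p.2⟫ + w.2) * K p.1) * K p.1 * g p.2‖ * ‖innerAddCLM p.2‖ :=
        ContinuousLinearMap.opNorm_smul_le _ _
    _ = exp ((⟪w.1, p.2⟫ + w.2) * K p.1) * |K p.1| * g p.2 * ‖innerAddCLM p.2‖ := by
        rw [norm_mul, norm_mul, norm_of_nonneg (exp_pos _).le, norm_of_nonneg hgp, norm_eq_abs]
    _ ≤ exp (R * M + R * M * ‖p.2‖) * |K p.1| * g p.2 * (‖p.2‖ + 1) := by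
        gcongr
        exact norm_innerAddCLM_le p.2
    _ = exp (R * M) * (|K p.1| * ((‖p.2‖ + 1) * exp (R * M * ‖p.2‖) * g p.2)) := by
        rw [exp_add]; ring

variable [MeasurableSpace Z] [MeasurableSpace V]

theorem dominatedOnBounded_expIntegrandFDeriv {μ : Measure Z} {ν : Measure V}
    (hK_bdd : ∃ M, ∀ z, |K z| ≤ M) (hK_int : Integrable K μ) (hg : ∀ y, 0 ≤ g y)
    (hg_mom : ∀ ρ, 0 ≤ ρ → Integrable (fun y => (‖y‖ + 1) * exp (ρ * ‖y‖) * g y) ν) :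
    DominatedOnBounded (expIntegrandFDeriv K g) (μ.prod ν) := by
  obtain ⟨M, hM⟩ := hK_bdd
  intro R
  set ρ := max R 0 * max M 0
  have hbound := (hK_int.abs.mul_prod (hg_mom ρ (by positivity))).const_mul (exp ρ)
  refine ⟨_, hbound, .of_forall fun p w hw => ?_⟩
  exact norm_expIntegrandFDeriv_le (fun z => (hM z).trans (le_max_left M 0)) hg
    (hw.trans (le_max_left R 0)) p

variable [OpensMeasurableSpace V]

theorem measurable_expIntegrand (hK : Measurable K) (hg : Measurable g) (w : V × ℝ) :
    Measurable (expIntegrand K g w) := by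
  have hinner : Measurable fun y : V => ⟪w.1, y⟫ :=
    (continuous_const.inner continuous_id).measurable
  unfold expIntegrand
  fun_prop

theorem aestronglyMeasurable_expIntegrandFDeriv [SecondCountableTopology V] (hK : Measurable K)
    (hg : Measurable g) (μ : Measure (Z × V)) (w : V × ℝ) :
    AEStronglyMeasurable (expIntegrandFDeriv K g w) μ := by
  have hinner : Measurable fun y : V => ⟪w.1, y⟫ :=
    (continuous_const.inner continuous_id).measurable
  have hscalar :
      Measurable fun p : Z × V => exp ((⟪w.1, p.2⟫ + w.2) * K p.1) * K p.1 * g p.2 := by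
    fun_prop
  exact hscalar.aestronglyMeasurable.smul
    (continuous_innerAddCLM.comp_aestronglyMeasurable measurable_snd.aestronglyMeasurable)

end ExponentialIntegrand

theorem stmt4_general (d q : ℕ)
    (K : EuclideanSpace ℝ (Fin d) → ℝ)
    (f : EuclideanSpace ℝ (Fin d) → EuclideanSpace ℝ (Fin q) → ℝ)
    (x : EuclideanSpace ℝ (Fin d))
    (hKmeas : Measurable K) (hKbdd : ∃ M : ℝ, ∀ z, |K z| ≤ M)
    (hKint : Integrable K)
    (hfmeas : Measurable (f x)) (hfnn : ∀ y, 0 ≤ f x y)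
    (hmom : ∀ (m ρ : ℝ), 0 ≤ m → 0 ≤ ρ →
      Integrable (fun y : EuclideanSpace ℝ (Fin q) =>
        ‖y‖ ^ m * Real.exp (ρ * ‖y‖) * f x y)) :
    ContDiff ℝ 1
      (fun w : EuclideanSpace ℝ (Fin q) × ℝ =>
        ∫ p : EuclideanSpace ℝ (Fin d) × EuclideanSpace ℝ (Fin q),
          (Real.exp (((inner ℝ w.1 p.2 : ℝ) + w.2) * K p.1) - 1) * f x p.2)
    ∧ ∀ (u : EuclideanSpace ℝ (Fin q)) (v : ℝ) (u' : EuclideanSpace ℝ (Fin q)) (v' : ℝ),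
      (fderiv ℝ
        (fun w : EuclideanSpace ℝ (Fin q) × ℝ =>
          ∫ p : EuclideanSpace ℝ (Fin d) × EuclideanSpace ℝ (Fin q),
            (Real.exp (((inner ℝ w.1 p.2 : ℝ) + w.2) * K p.1) - 1) * f x p.2) (u, v)) (u', v')
      = ∫ p : EuclideanSpace ℝ (Fin d) × EuclideanSpace ℝ (Fin q),
          ((inner ℝ u' p.2 : ℝ) + v') * Real.exp (((inner ℝ u p.2 : ℝ) + v) * K p.1)
            * K p.1 * f x p.2 := by
  have hf_mom : ∀ ρ, 0 ≤ ρ → Integrable fun y => (‖y‖ + 1) * exp (ρ * ‖y‖) * f x y :=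
    fun ρ hρ => by
      refine ((hmom 1 ρ zero_le_one hρ).add (hmom 0 ρ le_rfl hρ)).congr (.of_forall fun y => ?_)
      simp only [Pi.add_apply, rpow_one, rpow_zero]
      ring
  have hF_meas (w : EuclideanSpace ℝ (Fin q) × ℝ) :
      AEStronglyMeasurable (expIntegrand K (f x) w) volume :=
    (measurable_expIntegrand hKmeas hfmeas w).aestronglyMeasurable
  have hF_int : Integrable (expIntegrand K (f x) 0) := by
    rw [expIntegrand_zero]
    exact integrable_zero _ _ _
  have hF'_meas := aestronglyMeasurable_expIntegrandFDeriv hKmeas hfmeas volume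
  have hF' : ∀ᵐ p, ∀ w,
      HasFDerivAt (expIntegrand K (f x) · p) (expIntegrandFDeriv K (f x) w p) w :=
    .of_forall fun p w => hasFDerivAt_expIntegrand w p
  have hF'_dom : DominatedOnBounded (expIntegrandFDeriv K (f x)) volume :=
    dominatedOnBounded_expIntegrandFDeriv hKbdd hKint hfnn hf_mom
  refine ⟨contDiff_one_integral_of_dominatedOnBounded hF_meas hF_int hF'_meas hF'
    (.of_forall continuous_expIntegrandFDeriv) hF'_dom, fun u v u' v' => ?_⟩
  have hfderiv := (hasFDerivAt_integral_of_dominatedOnBounded hF_meas hF_int hF'_meas hF'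
    hF'_dom (u, v)).fderiv
  unfold expIntegrand at hfderiv
  rw [hfderiv, ContinuousLinearMap.integral_apply (hF'_dom.integrable (hF'_meas _))]
  simp only [expIntegrandFDeriv_apply]

/-- `Ψ_x` is continuously differentiable on `ℝ^q × ℝ`, and its differential acts on a direction
`(u',v')` as `∫ (⟨u',y⟩ + v') e^{(⟨u,y⟩+v)K(z)} K(z) f(x,y) dz dy` (which encodes the gradient
`(∫ y e^{(⟨u,y⟩+v)K(z)} K(z) f, ∫ e^{(⟨u,y⟩+v)K(z)} K(z) f)`). -/
theorem stmt4 (d q : ℕ)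
    (K : EuclideanSpace ℝ (Fin d) → ℝ)
    (f : EuclideanSpace ℝ (Fin d) → EuclideanSpace ℝ (Fin q) → ℝ)
    (x : EuclideanSpace ℝ (Fin d))
    (hKmeas : Measurable K) (hKbdd : ∃ M : ℝ, ∀ z, |K z| ≤ M)
    (hKint : Integrable K)
    (hfmeas : Measurable (f x)) (hfnn : ∀ y, 0 ≤ f x y)
    (hfprob : ∫ y, f x y = 1)
    (hmom : ∀ (m ρ : ℝ), 0 ≤ m → 0 ≤ ρ →
      Integrable (fun y : EuclideanSpace ℝ (Fin q) =>
        ‖y‖ ^ m * Real.exp (ρ * ‖y‖) * f x y)) :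
    ContDiff ℝ 1
      (fun w : EuclideanSpace ℝ (Fin q) × ℝ =>
        ∫ p : EuclideanSpace ℝ (Fin d) × EuclideanSpace ℝ (Fin q),
          (Real.exp (((inner ℝ w.1 p.2 : ℝ) + w.2) * K p.1) - 1) * f x p.2)
    ∧ ∀ (u : EuclideanSpace ℝ (Fin q)) (v : ℝ) (u' : EuclideanSpace ℝ (Fin q)) (v' : ℝ),
      (fderiv ℝ
        (fun w : EuclideanSpace ℝ (Fin q) × ℝ =>
          ∫ p : EuclideanSpace ℝ (Fin d) × EuclideanSpace ℝ (Fin q),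
            (Real.exp (((inner ℝ w.1 p.2 : ℝ) + w.2) * K p.1) - 1) * f x p.2) (u, v)) (u', v')
      = ∫ p : EuclideanSpace ℝ (Fin d) × EuclideanSpace ℝ (Fin q),
          ((inner ℝ u' p.2 : ℝ) + v') * Real.exp (((inner ℝ u p.2 : ℝ) + v) * K p.1)
            * K p.1 * f x p.2 :=
  stmt4_general d q K f x hKmeas hKbdd hKint hfmeas hfnn hmom
end

section
/- If the kernel K is nonnegative (λ(S₋)=0), then I_x(0⃗,0) = g(x)·λ(S₊), where S₊ = {z : K(z) > 0}, and I_x(t₁,0) = +∞ for every t₁ ≠ 0⃗. -/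
/-!
Since `K ≥ 0`, the integrand `e^{(⟨u,y⟩+v)K(z)} - 1` is at least `-1` on `S₊` and vanishes off
`S₊`, so `-Ψ_x(u,v) ≤ g(x) λ(S₊)`; along `u = 0`, `v = -n` the value `-Ψ_x(0,-n)` equals
`g(x) ∫ (1 - e^{-nK})`, which increases to `g(x) λ(S₊)` by monotone convergence.
For `t₁ ≠ 0` pick `u` with `⟨u,t₁⟩` large and then send `v → -∞`: only `⟨u,y⟩ > n` contributes
positively, and there `e^s - 1 ≤ s e^s` together with `1 < ⟨u,y⟩/n` gives `Ψ_x(u,-n) = O(1/n)`,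
the constant being finite by the exponential moment hypothesis.
-/

open MeasureTheory Real ENNReal Filter Topology

lemma ofReal_integral_le_lintegral_ofReal {α : Type*} [MeasurableSpace α] {μ : Measure α}
    (g : α → ℝ) : ENNReal.ofReal (∫ z, g z ∂μ) ≤ ∫⁻ z, ENNReal.ofReal (g z) ∂μ := by
  by_cases hg : Integrable g μ
  · rw [integral_eq_lintegral_pos_part_sub_lintegral_neg_part hg]
    exact (ENNReal.ofReal_le_ofReal (sub_le_self _ toReal_nonneg)).trans ofReal_toReal_le
  · simp [integral_undef hg]

lemma tendsto_ofReal_integral_one_sub_exp_neg_mul {α : Type*} [MeasurableSpace α]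
    {μ : Measure α} {K : α → ℝ} (hK : Measurable K) (hKnn : ∀ z, 0 ≤ K z)
    (hKint : Integrable K μ) :
    Tendsto (fun n : ℕ => ENNReal.ofReal (∫ z, 1 - exp (-(n * K z)) ∂μ)) atTop
      (𝓝 (μ {z | 0 < K z})) := by
  have hnn (n : ℕ) (z : α) : 0 ≤ 1 - exp (-(n * K z)) := by
    have : 0 ≤ (n : ℝ) * K z := mul_nonneg n.cast_nonneg (hKnn z)
    linarith [exp_le_one_iff.2 (neg_nonpos.2 this)]
  have hmeas (n : ℕ) : Measurable fun z => 1 - exp (-(n * K z)) := by fun_prop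
  have hint (n : ℕ) : Integrable (fun z => 1 - exp (-(n * K z))) μ := by
    refine (hKint.const_mul n).mono' (hmeas n).aestronglyMeasurable (ae_of_all _ fun z => ?_)
    rw [norm_of_nonneg (hnn n z)]
    linarith [one_sub_le_exp_neg ((n : ℝ) * K z)]
  simp_rw [ofReal_integral_eq_lintegral_ofReal (hint _) (ae_of_all _ (hnn _))]
  rw [← lintegral_indicator_one (measurableSet_lt measurable_const hK)]
  refine lintegral_tendsto_of_tendsto_of_monotone (fun n => (hmeas n).ennreal_ofReal.aemeasurable)
    (ae_of_all _ fun z m n hmn => ENNReal.ofReal_le_ofReal ?_) (ae_of_all _ fun z => ?_)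
  · have : (m : ℝ) * K z ≤ n * K z := mul_le_mul_of_nonneg_right (by exact_mod_cast hmn) (hKnn z)
    linarith [exp_le_exp.2 (neg_le_neg this)]
  · rcases (hKnn z).lt_or_eq with hz | hz
    · rw [Set.indicator_of_mem (show z ∈ {z | 0 < K z} from hz), Pi.one_apply,
        ← ENNReal.ofReal_one]
      refine ENNReal.tendsto_ofReal ?_
      have := tendsto_exp_atBot.comp
        (tendsto_neg_atTop_atBot.comp (tendsto_natCast_atTop_atTop.atTop_mul_const hz))
      simpa using this.const_sub 1
    · simp [← hz]

lemma exp_sub_one_le_mul_exp (t : ℝ) : exp t - 1 ≤ t * exp t := by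
  have h := mul_le_mul_of_nonneg_right (one_sub_le_exp_neg t) (exp_pos t).le
  rw [← exp_add, neg_add_cancel, exp_zero] at h
  linarith

lemma exp_sub_mul_sub_one_le {a b k M n : ℝ} (hab : |a| ≤ b) (hk : 0 ≤ k) (hkM : k ≤ M)
    (hn : 0 < n) : exp ((a - n) * k) - 1 ≤ k * (b ^ 2 * exp (M * b)) / n := by
  have hb : 0 ≤ b := (abs_nonneg a).trans hab
  rcases le_or_gt a n with han | han
  · have h1 : exp ((a - n) * k) ≤ 1 :=
      exp_le_one_iff.2 (mul_nonpos_of_nonpos_of_nonneg (by linarith) hk)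
    have h2 : 0 ≤ k * (b ^ 2 * exp (M * b)) / n := by positivity
    linarith
  · have ha : a ≤ b := (le_abs_self a).trans hab
    have ht0 : 0 ≤ (a - n) * k := mul_nonneg (by linarith) hk
    have htb : (a - n) * k ≤ b ^ 2 / n * k := by
      have : a ≤ b ^ 2 / n := by rw [le_div_iff₀ hn]; nlinarith
      nlinarith
    have htM : (a - n) * k ≤ M * b := by nlinarith
    calc exp ((a - n) * k) - 1 ≤ (a - n) * k * exp ((a - n) * k) := exp_sub_one_le_mul_exp _
      _ ≤ b ^ 2 / n * k * exp (M * b) :=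
          mul_le_mul htb (exp_le_exp.2 htM) (exp_pos _).le (by positivity)
      _ = k * (b ^ 2 * exp (M * b)) / n := by ring

section

variable {α E : Type*} [MeasurableSpace α] [MeasurableSpace E]
  [NormedAddCommGroup E] [InnerProductSpace ℝ E] {μ : Measure α} {ν : Measure E}
  {K : α → ℝ} {f : E → ℝ} {M : ℝ}

/-- The paper's `Ψ_x`, for the density `f = f(x, ·)`. -/
noncomputable def poissonCumulant (μ : Measure α) (ν : Measure E) (K : α → ℝ) (f : E → ℝ)
    (u : E) (v : ℝ) : ℝ :=
  ∫ p, (exp ((inner ℝ u p.2 + v) * K p.1) - 1) * f p.2 ∂μ.prod ν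

/-- The paper's `I_x(t₁, t₂)`, the Fenchel–Legendre transform of `Ψ_x`. -/
noncomputable def rateFunction (μ : Measure α) (ν : Measure E) (K : α → ℝ) (f : E → ℝ)
    (t₁ : E) (t₂ : ℝ) : ℝ≥0∞ :=
  ⨆ w : E × ℝ, ENNReal.ofReal (inner ℝ w.1 t₁ + w.2 * t₂ - poissonCumulant μ ν K f w.1 w.2)

lemma ofReal_neg_poissonCumulant_le [SFinite ν] (hK : Measurable K) (hKnn : ∀ z, 0 ≤ K z)
    (hf : Integrable f ν) (hfnn : ∀ y, 0 ≤ f y) (hf1 : ∫ y, f y ∂ν = 1) (u : E) (v : ℝ) :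
    ENNReal.ofReal (-poissonCumulant μ ν K f u v) ≤ μ {z | 0 < K z} := by
  have hS : MeasurableSet {z | 0 < K z} := measurableSet_lt measurable_const hK
  have hpt (p : α × E) : ENNReal.ofReal (-((exp ((inner ℝ u p.2 + v) * K p.1) - 1) * f p.2))
      ≤ {z | 0 < K z}.indicator 1 p.1 * ENNReal.ofReal (f p.2) := by
    rcases (hKnn p.1).lt_or_eq with hz | hz
    · rw [Set.indicator_of_mem (show p.1 ∈ {z | 0 < K z} from hz), Pi.one_apply, one_mul]
      refine ENNReal.ofReal_le_ofReal ?_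
      nlinarith [exp_pos ((inner ℝ u p.2 + v) * K p.1), hfnn p.2]
    · simp [← hz]
  calc ENNReal.ofReal (-poissonCumulant μ ν K f u v)
      ≤ ∫⁻ p, ENNReal.ofReal (-((exp ((inner ℝ u p.2 + v) * K p.1) - 1) * f p.2)) ∂μ.prod ν := by
        rw [poissonCumulant, ← integral_neg]
        exact ofReal_integral_le_lintegral_ofReal _
    _ ≤ ∫⁻ p, {z | 0 < K z}.indicator 1 p.1 * ENNReal.ofReal (f p.2) ∂μ.prod ν :=
        lintegral_mono hpt
    _ = μ {z | 0 < K z} := by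
        rw [lintegral_prod_mul (measurable_one.indicator hS).aemeasurable
            hf.1.aemeasurable.ennreal_ofReal, lintegral_indicator_one hS,
           ← ofReal_integral_eq_lintegral_ofReal hf (ae_of_all _ hfnn),
          hf1, ENNReal.ofReal_one, mul_one]

lemma poissonCumulant_zero_left [SFinite μ] [SFinite ν] (v : ℝ) :
    poissonCumulant μ ν K f 0 v = (∫ z, exp (v * K z) - 1 ∂μ) * ∫ y, f y ∂ν := by
  simp only [poissonCumulant, inner_zero_left, zero_add]
  exact integral_prod_mul (fun z => exp (v * K z) - 1) f

theorem rateFunction_zero_zero [SFinite μ] [SFinite ν] (hK : Measurable K)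
    (hKnn : ∀ z, 0 ≤ K z) (hKint : Integrable K μ) (hfnn : ∀ y, 0 ≤ f y)
    (hf1 : ∫ y, f y ∂ν = 1) :
    rateFunction μ ν K f 0 0 = μ {z | 0 < K z} := by
  have hf : Integrable f ν := .of_integral_ne_zero (by simp [hf1])
  have hval (w : E × ℝ) : inner ℝ w.1 (0 : E) + w.2 * 0 - poissonCumulant μ ν K f w.1 w.2
      = -poissonCumulant μ ν K f w.1 w.2 := by simp
  refine le_antisymm (iSup_le fun w => ?_) (le_of_tendsto'
    (tendsto_ofReal_integral_one_sub_exp_neg_mul hK hKnn hKint) fun n => ?_)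
  · rw [hval]
    exact ofReal_neg_poissonCumulant_le hK hKnn hf hfnn hf1 w.1 w.2
  · refine le_iSup_of_le ((0 : E), -(n : ℝ)) (le_of_eq ?_)
    rw [hval, poissonCumulant_zero_left, hf1, mul_one, ← integral_neg]
    simp
lemma poissonCumulant_neg_le [SFinite μ] [SFinite ν] (hKnn : ∀ z, 0 ≤ K z)
    (hKM : ∀ z, K z ≤ M) (hKint : Integrable K μ) (hfnn : ∀ y, 0 ≤ f y) {u : E} {n : ℝ}
    (hn : 0 < n)
    (hint : Integrable (fun p : α × E => (exp ((inner ℝ u p.2 + -n) * K p.1) - 1) * f p.2)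
      (μ.prod ν))
    (hmom : Integrable (fun y => ‖y‖ ^ 2 * exp (M * ‖u‖ * ‖y‖) * f y) ν) :
    poissonCumulant μ ν K f u (-n) ≤
      (∫ z, K z ∂μ) * (‖u‖ ^ 2 * ∫ y, ‖y‖ ^ 2 * exp (M * ‖u‖ * ‖y‖) * f y ∂ν) / n := by
  set h : E → ℝ := fun y => ‖u‖ ^ 2 * (‖y‖ ^ 2 * exp (M * ‖u‖ * ‖y‖) * f y) / n
  have hpt (p : α × E) : (exp ((inner ℝ u p.2 + -n) * K p.1) - 1) * f p.2 ≤ K p.1 * h p.2 := by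
    have := exp_sub_mul_sub_one_le (abs_real_inner_le_norm u p.2) (hKnn p.1) (hKM p.1) hn
    calc (exp ((inner ℝ u p.2 + -n) * K p.1) - 1) * f p.2
        ≤ K p.1 * ((‖u‖ * ‖p.2‖) ^ 2 * exp (M * (‖u‖ * ‖p.2‖))) / n * f p.2 := by
          rw [← sub_eq_add_neg]; exact mul_le_mul_of_nonneg_right this (hfnn p.2)
      _ = K p.1 * h p.2 := by simp only [h]; ring_nf
  calc poissonCumulant μ ν K f u (-n)
      ≤ ∫ p, K p.1 * h p.2 ∂μ.prod ν :=
        integral_mono hint (hKint.mul_prod ((hmom.const_mul _).div_const _)) hpt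
    _ = _ := by
        rw [integral_prod_mul, integral_div, integral_const_mul]; ring

theorem rateFunction_eq_top [SFinite μ] [SFinite ν] (hKnn : ∀ z, 0 ≤ K z) (hM : 0 ≤ M)
    (hKM : ∀ z, K z ≤ M) (hKint : Integrable K μ) (hfnn : ∀ y, 0 ≤ f y)
    (hint : ∀ (u : E) (v : ℝ), Integrable
      (fun p : α × E => (exp ((inner ℝ u p.2 + v) * K p.1) - 1) * f p.2) (μ.prod ν))
    (hmom : ∀ ρ : ℝ, 0 ≤ ρ → Integrable (fun y => ‖y‖ ^ 2 * exp (ρ * ‖y‖) * f y) ν)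
    {t : E} (ht : t ≠ 0) :
    rateFunction μ ν K f t 0 = ⊤ := by
  rw [rateFunction, iSup_eq_top]
  intro b hb
  set u : E := ((b.toReal + 2) / ‖t‖ ^ 2) • t
  have hut : inner ℝ u t = b.toReal + 2 := by
    rw [real_inner_smul_left, real_inner_self_eq_norm_sq,
      div_mul_cancel₀ _ (pow_ne_zero 2 (norm_ne_zero_iff.2 ht))]
  set c := (∫ z, K z ∂μ) * (‖u‖ ^ 2 * ∫ y, ‖y‖ ^ 2 * exp (M * ‖u‖ * ‖y‖) * f y ∂ν)
  have hn : (0 : ℝ) < ⌈c⌉₊ + 1 := by positivity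
  have hcn : c / (⌈c⌉₊ + 1) ≤ 1 := (div_le_one hn).2 ((Nat.le_ceil c).trans (by linarith))
  have hΨ := poissonCumulant_neg_le hKnn hKM hKint hfnn hn (hint u _)
    (hmom (M * ‖u‖) (by positivity))
  refine ⟨(u, -(⌈c⌉₊ + 1 : ℝ)), ?_⟩
  rw [ENNReal.lt_ofReal_iff_toReal_lt hb.ne, hut]
  linarith
end

theorem stmt6_general (d q : ℕ)
    (K : EuclideanSpace ℝ (Fin d) → ℝ)
    (f : EuclideanSpace ℝ (Fin d) → EuclideanSpace ℝ (Fin q) → ℝ)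
    (x : EuclideanSpace ℝ (Fin d))
    (hKmeas : Measurable K) (hKbdd : ∃ M : ℝ, ∀ z, |K z| ≤ M)
    (hKint : Integrable K)
    (hKnn : ∀ z, 0 ≤ K z)
    (hfnn : ∀ y, 0 ≤ f x y)
    (hfprob : ∫ y, f x y = 1)
    (hmom : ∀ (m ρ : ℝ), 0 ≤ m → 0 ≤ ρ →
      Integrable (fun y : EuclideanSpace ℝ (Fin q) =>
        ‖y‖ ^ m * Real.exp (ρ * ‖y‖) * f x y))
    (hint : ∀ (u : EuclideanSpace ℝ (Fin q)) (v : ℝ),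
      Integrable (fun p : EuclideanSpace ℝ (Fin d) × EuclideanSpace ℝ (Fin q) =>
        (Real.exp (((inner ℝ u p.2 : ℝ) + v) * K p.1) - 1) * f x p.2))
    (g : ℝ) (hg : g = ∫ y, f x y) :
    (⨆ w : EuclideanSpace ℝ (Fin q) × ℝ,
        ENNReal.ofReal ((inner ℝ w.1 (0 : EuclideanSpace ℝ (Fin q)) : ℝ) + w.2 * 0 -
          ∫ p : EuclideanSpace ℝ (Fin d) × EuclideanSpace ℝ (Fin q),
            (Real.exp (((inner ℝ w.1 p.2 : ℝ) + w.2) * K p.1) - 1) * f x p.2))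
      = ENNReal.ofReal g * volume {z | 0 < K z}
    ∧ ∀ t₁ : EuclideanSpace ℝ (Fin q), t₁ ≠ 0 →
      (⨆ w : EuclideanSpace ℝ (Fin q) × ℝ,
        ENNReal.ofReal ((inner ℝ w.1 t₁ : ℝ) + w.2 * 0 -
          ∫ p : EuclideanSpace ℝ (Fin d) × EuclideanSpace ℝ (Fin q),
            (Real.exp (((inner ℝ w.1 p.2 : ℝ) + w.2) * K p.1) - 1) * f x p.2)) = ⊤ := by
  obtain ⟨M, hM⟩ := hKbdd
  have hKM (z : EuclideanSpace ℝ (Fin d)) : K z ≤ M := (le_abs_self _).trans (hM z)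
  have hmom₂ (ρ : ℝ) (hρ : 0 ≤ ρ) : Integrable (fun y => ‖y‖ ^ 2 * exp (ρ * ‖y‖) * f x y) := by
    simpa only [Real.rpow_two] using hmom 2 ρ zero_le_two hρ
  refine ⟨?_, fun t ht => ?_⟩
  · rw [hg, hfprob, ENNReal.ofReal_one, one_mul]
    exact rateFunction_zero_zero hKmeas hKnn hKint hfnn hfprob
  · exact rateFunction_eq_top hKnn ((abs_nonneg _).trans (hM 0)) hKM hKint hfnn hint hmom₂ ht

/-- For a nonnegative kernel `K`, the Legendre transform `I_x` of `Ψ_x` satisfies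
`I_x(0,0) = g(x)·λ(S₊)` where `S₊ = {K > 0}`, and `I_x(t₁,0) = ∞` for `t₁ ≠ 0`. -/
theorem stmt6 (d q : ℕ)
    (K : EuclideanSpace ℝ (Fin d) → ℝ)
    (f : EuclideanSpace ℝ (Fin d) → EuclideanSpace ℝ (Fin q) → ℝ)
    (x : EuclideanSpace ℝ (Fin d))
    (hKmeas : Measurable K) (hKbdd : ∃ M : ℝ, ∀ z, |K z| ≤ M)
    (hKint : Integrable K) (hK1 : ∫ z, K z = 1)
    (hKnn : ∀ z, 0 ≤ K z)
    (hfmeas : Measurable (f x)) (hfnn : ∀ y, 0 ≤ f x y)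
    (hfprob : ∫ y, f x y = 1)
    (hmom : ∀ (m ρ : ℝ), 0 ≤ m → 0 ≤ ρ →
      Integrable (fun y : EuclideanSpace ℝ (Fin q) =>
        ‖y‖ ^ m * Real.exp (ρ * ‖y‖) * f x y))
    (hint : ∀ (u : EuclideanSpace ℝ (Fin q)) (v : ℝ),
      Integrable (fun p : EuclideanSpace ℝ (Fin d) × EuclideanSpace ℝ (Fin q) =>
        (Real.exp (((inner ℝ u p.2 : ℝ) + v) * K p.1) - 1) * f x p.2))
    (g : ℝ) (hg : g = ∫ y, f x y) (hgpos : 0 < g) :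
    (⨆ w : EuclideanSpace ℝ (Fin q) × ℝ,
        ENNReal.ofReal ((inner ℝ w.1 (0 : EuclideanSpace ℝ (Fin q)) : ℝ) + w.2 * 0 -
          ∫ p : EuclideanSpace ℝ (Fin d) × EuclideanSpace ℝ (Fin q),
            (Real.exp (((inner ℝ w.1 p.2 : ℝ) + w.2) * K p.1) - 1) * f x p.2))
      = ENNReal.ofReal g * volume {z | 0 < K z}
    ∧ ∀ t₁ : EuclideanSpace ℝ (Fin q), t₁ ≠ 0 →
      (⨆ w : EuclideanSpace ℝ (Fin q) × ℝ,
        ENNReal.ofReal ((inner ℝ w.1 t₁ : ℝ) + w.2 * 0 -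
          ∫ p : EuclideanSpace ℝ (Fin d) × EuclideanSpace ℝ (Fin q),
            (Real.exp (((inner ℝ w.1 p.2 : ℝ) + w.2) * K p.1) - 1) * f x p.2)) = ⊤ :=
  stmt6_general d q K f x hKmeas hKbdd hKint hKnn hfnn hfprob hmom hint g hg
end

section
/- If f(x,·) is symmetric in each coordinate of y, then Ψ_x(Au, v) = Ψ_x(u, v) for every diagonal matrix A with diagonal entries ±1, and consequently I_x(0⃗, 0) ≤ I_x(s, 0) for all s ∈ ℝ^q. -/
open MeasureTheory ENNReal

/-!
Substituting `y ↦ A y` in the integral defining `Ψ_x` gives `Ψ_x(A u, v) = Ψ_x(u, v)` for every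
linear isometry `A` leaving `f(x, ·)` invariant, and sign flips are such isometries. Taking
`A = -1`, `Ψ_x` is even in `u`; so whichever of `(u, v)`, `(-u, v)` has `⟨·, s⟩ ≥ 0` contributes
to `I_x(s, 0)` at least what `(u, v)` contributes to `I_x(0, 0)`.
-/

section Cumulant

variable {E F : Type*} [MeasureSpace E] [NormedAddCommGroup F] [InnerProductSpace ℝ F]

/-- `cumulant K (f x)` is the paper's `Ψ_x`. -/
noncomputable def cumulant [MeasureSpace F] (K : E → ℝ) (g : F → ℝ) (u : F) (v : ℝ) : ℝ :=
  ∫ p : E × F, (Real.exp ((inner ℝ u p.2 + v) * K p.1) - 1) * g p.2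

noncomputable def legendreTransform (Ψ : F → ℝ → ℝ) (s : F) (t : ℝ) : ℝ≥0∞ :=
  ⨆ w : F × ℝ, ENNReal.ofReal (inner ℝ w.1 s + w.2 * t - Ψ w.1 w.2)

theorem cumulant_map_eq [MeasureSpace F] [BorelSpace F] [SFinite (volume : Measure E)]
    [SFinite (volume : Measure F)] (K : E → ℝ) {g : F → ℝ} {L : F ≃ₗᵢ[ℝ] F}
    (hL : MeasurePreserving L) (hg : ∀ y, g (L y) = g y) (u : F) (v : ℝ) :
    cumulant K g (L u) v = cumulant K g u v := by
  let e : E × F ≃ᵐ E × F :=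
    (MeasurableEquiv.refl E).prodCongr L.toHomeomorph.toMeasurableEquiv
  have he : MeasurePreserving e := (MeasurePreserving.id volume).prod hL
  have he_apply (p : E × F) : e p = (p.1, L p.2) := rfl
  rw [cumulant, ← he.integral_comp']
  simp only [he_apply, LinearIsometryEquiv.inner_map_map, hg, cumulant]

theorem legendreTransform_zero_le_of_even {Ψ : F → ℝ → ℝ} (hΨ : ∀ u v, Ψ (-u) v = Ψ u v)
    (s : F) (t : ℝ) : legendreTransform Ψ 0 t ≤ legendreTransform Ψ s t := by
  refine iSup_le fun ⟨u, v⟩ => ?_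
  rcases le_total 0 (inner ℝ u s) with h | h
  · refine le_iSup_of_le (u, v) (ENNReal.ofReal_le_ofReal ?_)
    simp only [inner_zero_right]
    linarith
  · refine le_iSup_of_le (-u, v) (ENNReal.ofReal_le_ofReal ?_)
    simp only [inner_zero_right, inner_neg_left, hΨ]
    linarith

end Cumulant

noncomputable def signFlip {ι : Type*} [Fintype ι] (ε : ι → ℝ) (hε : ∀ j, |ε j| = 1) :
    EuclideanSpace ℝ ι ≃ₗᵢ[ℝ] EuclideanSpace ℝ ι where
  toFun y := (EuclideanSpace.equiv ι ℝ).symm fun j => ε j * y j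
  invFun y := (EuclideanSpace.equiv ι ℝ).symm fun j => ε j * y j
  map_add' y z := by ext j; simp [mul_add]
  map_smul' c y := by ext j; simp [mul_left_comm]
  left_inv y := by ext j; simp [← mul_assoc, ← abs_mul_abs_self (ε j), hε j]
  right_inv y := by ext j; simp [← mul_assoc, ← abs_mul_abs_self (ε j), hε j]
  norm_map' y := by simp [EuclideanSpace.norm_eq, hε]

theorem stmt8_general (d q : ℕ)
    (K : EuclideanSpace ℝ (Fin d) → ℝ)
    (f : EuclideanSpace ℝ (Fin d) → EuclideanSpace ℝ (Fin q) → ℝ)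
    (x : EuclideanSpace ℝ (Fin d))
    (hsym : ∀ ε : Fin q → ℝ, (∀ j, ε j = 1 ∨ ε j = -1) →
      ∀ y : EuclideanSpace ℝ (Fin q),
        f x ((EuclideanSpace.equiv (Fin q) ℝ).symm fun j => ε j * y j) = f x y) :
    (∀ ε : Fin q → ℝ, (∀ j, ε j = 1 ∨ ε j = -1) →
      ∀ (u : EuclideanSpace ℝ (Fin q)) (v : ℝ),
        (∫ p : EuclideanSpace ℝ (Fin d) × EuclideanSpace ℝ (Fin q),
          (Real.exp (((inner ℝ ((EuclideanSpace.equiv (Fin q) ℝ).symm fun j => ε j * u j)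
              p.2 : ℝ) + v) * K p.1) - 1) * f x p.2)
        = ∫ p : EuclideanSpace ℝ (Fin d) × EuclideanSpace ℝ (Fin q),
            (Real.exp (((inner ℝ u p.2 : ℝ) + v) * K p.1) - 1) * f x p.2)
    ∧ ∀ s : EuclideanSpace ℝ (Fin q),
      (⨆ w : EuclideanSpace ℝ (Fin q) × ℝ,
        ENNReal.ofReal ((inner ℝ w.1 (0 : EuclideanSpace ℝ (Fin q)) : ℝ) + w.2 * 0 -
          ∫ p : EuclideanSpace ℝ (Fin d) × EuclideanSpace ℝ (Fin q),
            (Real.exp (((inner ℝ w.1 p.2 : ℝ) + w.2) * K p.1) - 1) * f x p.2))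
      ≤ ⨆ w : EuclideanSpace ℝ (Fin q) × ℝ,
        ENNReal.ofReal ((inner ℝ w.1 s : ℝ) + w.2 * 0 -
          ∫ p : EuclideanSpace ℝ (Fin d) × EuclideanSpace ℝ (Fin q),
            (Real.exp (((inner ℝ w.1 p.2 : ℝ) + w.2) * K p.1) - 1) * f x p.2) := by
  have hflip : ∀ ε : Fin q → ℝ, (∀ j, ε j = 1 ∨ ε j = -1) → ∀ j, |ε j| = 1 := fun ε hε j => by
    rcases hε j with h | h <;> simp [h]
  have hfneg (y : EuclideanSpace ℝ (Fin q)) : f x (-y) = f x y := by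
    convert hsym (fun _ => -1) (fun _ => Or.inr rfl) y using 2
    ext j
    simp
  refine ⟨fun ε hε u v => ?_, fun s => ?_⟩
  · exact cumulant_map_eq K (signFlip ε (hflip ε hε)).measurePreserving (hsym ε hε) u v
  · have hneg := (LinearIsometryEquiv.neg ℝ (E := EuclideanSpace ℝ (Fin q))).measurePreserving
    exact legendreTransform_zero_le_of_even (cumulant_map_eq K hneg hfneg) s 0

/-- If `f(x,·)` is symmetric in each coordinate of `y`, then `Ψ_x(Au,v) = Ψ_x(u,v)` for every
sign-flip diagonal matrix `A`, and consequently `I_x(0,0) ≤ I_x(s,0)` for every `s`. -/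
theorem stmt8 (d q : ℕ)
    (K : EuclideanSpace ℝ (Fin d) → ℝ)
    (f : EuclideanSpace ℝ (Fin d) → EuclideanSpace ℝ (Fin q) → ℝ)
    (x : EuclideanSpace ℝ (Fin d))
    (hKmeas : Measurable K) (hKbdd : ∃ M : ℝ, ∀ z, |K z| ≤ M)
    (hKint : Integrable K)
    (hfmeas : Measurable (f x)) (hfnn : ∀ y, 0 ≤ f x y)
    (hfprob : ∫ y, f x y = 1)
    (hmom : ∀ (m ρ : ℝ), 0 ≤ m → 0 ≤ ρ →
      Integrable (fun y : EuclideanSpace ℝ (Fin q) =>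
        ‖y‖ ^ m * Real.exp (ρ * ‖y‖) * f x y))
    (hint : ∀ (u : EuclideanSpace ℝ (Fin q)) (v : ℝ),
      Integrable (fun p : EuclideanSpace ℝ (Fin d) × EuclideanSpace ℝ (Fin q) =>
        (Real.exp (((inner ℝ u p.2 : ℝ) + v) * K p.1) - 1) * f x p.2))
    (hsym : ∀ ε : Fin q → ℝ, (∀ j, ε j = 1 ∨ ε j = -1) →
      ∀ y : EuclideanSpace ℝ (Fin q),
        f x ((EuclideanSpace.equiv (Fin q) ℝ).symm fun j => ε j * y j) = f x y) :
    (∀ ε : Fin q → ℝ, (∀ j, ε j = 1 ∨ ε j = -1) →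
      ∀ (u : EuclideanSpace ℝ (Fin q)) (v : ℝ),
        (∫ p : EuclideanSpace ℝ (Fin d) × EuclideanSpace ℝ (Fin q),
          (Real.exp (((inner ℝ ((EuclideanSpace.equiv (Fin q) ℝ).symm fun j => ε j * u j)
              p.2 : ℝ) + v) * K p.1) - 1) * f x p.2)
        = ∫ p : EuclideanSpace ℝ (Fin d) × EuclideanSpace ℝ (Fin q),
            (Real.exp (((inner ℝ u p.2 : ℝ) + v) * K p.1) - 1) * f x p.2)
    ∧ ∀ s : EuclideanSpace ℝ (Fin q),
      (⨆ w : EuclideanSpace ℝ (Fin q) × ℝ,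
        ENNReal.ofReal ((inner ℝ w.1 (0 : EuclideanSpace ℝ (Fin q)) : ℝ) + w.2 * 0 -
          ∫ p : EuclideanSpace ℝ (Fin d) × EuclideanSpace ℝ (Fin q),
            (Real.exp (((inner ℝ w.1 p.2 : ℝ) + w.2) * K p.1) - 1) * f x p.2))
      ≤ ⨆ w : EuclideanSpace ℝ (Fin q) × ℝ,
        ENNReal.ofReal ((inner ℝ w.1 s : ℝ) + w.2 * 0 -
          ∫ p : EuclideanSpace ℝ (Fin d) × EuclideanSpace ℝ (Fin q),
            (Real.exp (((inner ℝ w.1 p.2 : ℝ) + w.2) * K p.1) - 1) * f x p.2) :=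
  stmt8_general d q K f x hsym
end

section
/- With K = 1_D − 1_{D'} as above and minimizing over v, the resulting function u ↦ inf_v Ψ_x(u,v) is even: Ψ_x(u,v₀(u)) = Ψ_x(−u,v₀(−u)); consequently Condition inf_s I_x(s,0) = I_x(0,0) holds, i.e. I_x(s,0) ≥ I_x(0,0) for all s ∈ ℝ. -/
open MeasureTheory Real ENNReal

/-!
Since `∫ f = 1`, `Ψ_x(u, v) = λ(D) M(u) eᵛ + λ(D') M(-u) e⁻ᵛ - λ(D) - λ(D')`. By AM–GM its
infimum over `v` is `2 √(λ(D) M(u) λ(D') M(-u)) - λ(D) - λ(D')`, attained at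
`v₀(u) = log √(λ(D') M(-u) / (λ(D) M(u)))`, and this profile is visibly even in `u`. So any
point `(u, v)` in the supremum defining `I_x(0,0)` may be replaced by `(±u, v₀(±u))`, with the sign
chosen so that `±u s ≥ 0`, without decreasing the objective of `I_x(s,0)`.
-/

lemma two_mul_sqrt_mul_le_add {x y : ℝ} (hx : 0 ≤ x) (hy : 0 ≤ y) : 2 * √(x * y) ≤ x + y := by
  nlinarith [sq_nonneg (√x - √y), sq_sqrt hx, sq_sqrt hy, sqrt_mul hx y]

lemma two_mul_sqrt_mul_le_mul_exp_add_mul_exp_neg {a b : ℝ} (ha : 0 ≤ a) (hb : 0 ≤ b) (v : ℝ) :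
    2 * √(a * b) ≤ a * exp v + b * exp (-v) := by
  have hprod : a * exp v * (b * exp (-v)) = a * b := by
    rw [mul_mul_mul_comm, ← exp_add, add_neg_cancel, exp_zero, mul_one]
  simpa [hprod] using two_mul_sqrt_mul_le_add (x := a * exp v) (y := b * exp (-v))
    (by positivity) (by positivity)

lemma mul_exp_log_sqrt_div_add_mul_exp_neg {a b : ℝ} (ha : 0 < a) (hb : 0 < b) :
    a * exp (log √(b / a)) + b * exp (-log √(b / a)) = 2 * √(a * b) := by
  rw [exp_neg, exp_log (sqrt_pos.2 (div_pos hb ha)), ← sqrt_inv, inv_div]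
  have key : ∀ {c d : ℝ}, 0 < c → c * √(d / c) = √(c * d) := fun {c d} hc => by
    rw [← sqrt_sq hc.le, ← sqrt_mul (sq_nonneg c), sqrt_sq hc.le]
    congr 1; field_simp
  rw [key ha, key hb, mul_comm b a]; ring

lemma exp_mul_indicator_sub_indicator_sub_one {α : Type*} {D D' : Set α} (h : Disjoint D D')
    (t : ℝ) (x : α) :
    exp (t * (D.indicator (fun _ => (1 : ℝ)) x - D'.indicator (fun _ => (1 : ℝ)) x)) - 1
      = D.indicator (fun _ => (1 : ℝ)) x * (exp t - 1)
        + D'.indicator (fun _ => (1 : ℝ)) x * (exp (-t) - 1) := by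
  by_cases hx : x ∈ D
  · have hx' : x ∉ D' := h.notMem_of_mem_left hx
    simp [hx, hx']
  · by_cases hx' : x ∈ D'
    · simp [hx, hx']
    · simp [hx, hx']

lemma integral_prod_exp_mul_indicator_sub_indicator {α : Type*} [MeasurableSpace α]
    {μ : Measure α} [SFinite μ] {ν : Measure ℝ} [SFinite ν] {D D' : Set α}
    (hD : MeasurableSet D) (hD' : MeasurableSet D') (hdisj : Disjoint D D')
    (hDfin : μ D ≠ ∞) (hD'fin : μ D' ≠ ∞) {f : ℝ → ℝ} {u : ℝ} (hf : Integrable f ν)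
    (hfu : Integrable (fun y => exp (u * y) * f y) ν)
    (hfu' : Integrable (fun y => exp (-u * y) * f y) ν) (v : ℝ) :
    ∫ p, (exp ((u * p.2 + v) * (D.indicator (fun _ => (1 : ℝ)) p.1
        - D'.indicator (fun _ => (1 : ℝ)) p.1)) - 1) * f p.2 ∂μ.prod ν
      = (μ D).toReal * (exp v * ∫ y, exp (u * y) * f y ∂ν - ∫ y, f y ∂ν)
        + (μ D').toReal * (exp (-v) * ∫ y, exp (-u * y) * f y ∂ν - ∫ y, f y ∂ν) := by
  set g : ℝ → ℝ := fun y => exp v * (exp (u * y) * f y) - f y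
  set g' : ℝ → ℝ := fun y => exp (-v) * (exp (-u * y) * f y) - f y
  have hsplit : ∀ p : α × ℝ,
      (exp ((u * p.2 + v) * (D.indicator (fun _ => (1 : ℝ)) p.1
        - D'.indicator (fun _ => (1 : ℝ)) p.1)) - 1) * f p.2
      = D.indicator (fun _ => (1 : ℝ)) p.1 * g p.2
        + D'.indicator (fun _ => (1 : ℝ)) p.1 * g' p.2 := by
    intro p
    rw [exp_mul_indicator_sub_indicator_sub_one hdisj, neg_add, exp_add, exp_add, ← neg_mul]
    ring
  have hind : ∀ {s : Set α}, MeasurableSet s → μ s ≠ ∞ →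
      Integrable (s.indicator (fun _ => (1 : ℝ))) μ :=
    fun hs hfin => (integrableOn_const hfin).integrable_indicator hs
  have hg : Integrable g ν := (hfu.const_mul _).sub hf
  have hg' : Integrable g' ν := (hfu'.const_mul _).sub hf
  simp_rw [hsplit]
  rw [integral_add ((hind hD hDfin).mul_prod hg) ((hind hD' hD'fin).mul_prod hg'),
    integral_prod_mul, integral_prod_mul, integral_indicator_const _ hD,
    integral_indicator_const _ hD', integral_sub (hfu.const_mul _) hf,
    integral_sub (hfu'.const_mul _) hf, integral_const_mul, integral_const_mul]
  simp [Measure.real]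

noncomputable def fenchelLegendre (Ψ : ℝ × ℝ → ℝ) (z : ℝ × ℝ) : ℝ≥0∞ :=
  ⨆ w : ℝ × ℝ, ENNReal.ofReal (w.1 * z.1 + w.2 * z.2 - Ψ w)

lemma fenchelLegendre_zero_le_of_even {Ψ : ℝ × ℝ → ℝ} {g : ℝ → ℝ} (hg : ∀ u, g (-u) = g u)
    (hle : ∀ w, g w.1 ≤ Ψ w) (hattain : ∀ u, ∃ v, Ψ (u, v) = g u) (s : ℝ) :
    fenchelLegendre Ψ 0 ≤ fenchelLegendre Ψ (s, 0) := by
  refine iSup_le fun w => ?_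
  obtain ⟨u, hgu, hus⟩ : ∃ u, g u = g w.1 ∧ 0 ≤ u * s := by
    rcases le_total 0 (w.1 * s) with h | h
    · exact ⟨w.1, rfl, h⟩
    · exact ⟨-w.1, hg w.1, by linarith [neg_mul w.1 s]⟩
  obtain ⟨v, hv⟩ := hattain u
  refine le_iSup_of_le (u, v) (ENNReal.ofReal_le_ofReal ?_)
  simp only [Prod.fst_zero, Prod.snd_zero, mul_zero, add_zero]
  linarith [hle w]

theorem stmt10_general (D D' : Set ℝ)
    (hD : MeasurableSet D) (hD' : MeasurableSet D')
    (hdisj : D ∩ D' = ∅)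
    (hDfin : volume D ≠ ⊤) (hD'fin : volume D' ≠ ⊤)
    (hmeas1 : (volume D).toReal - (volume D').toReal = 1)
    (hD'pos : 0 < (volume D').toReal)
    (K : ℝ → ℝ)
    (hK : ∀ z, K z = D.indicator (fun _ => (1 : ℝ)) z - D'.indicator (fun _ => (1 : ℝ)) z)
    (f : ℝ → ℝ)
    (hprob : ∫ y, f y = 1)
    (hMint : ∀ u : ℝ, Integrable (fun y => Real.exp (u * y) * f y))
    (hMpos : ∀ u : ℝ, 0 < ∫ y, Real.exp (u * y) * f y) :
    (∀ u : ℝ,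
      (∫ p : ℝ × ℝ,
          (Real.exp ((u * p.2 +
            Real.log (Real.sqrt ((volume D').toReal * (∫ y, Real.exp (-u * y) * f y)
              / ((volume D).toReal * ∫ y, Real.exp (u * y) * f y)))) * K p.1) - 1) * f p.2)
      = ∫ p : ℝ × ℝ,
          (Real.exp ((-u * p.2 +
            Real.log (Real.sqrt ((volume D').toReal * (∫ y, Real.exp (u * y) * f y)
              / ((volume D).toReal * ∫ y, Real.exp (-u * y) * f y)))) * K p.1) - 1) * f p.2)
    ∧ ∀ s : ℝ,
      (⨆ w : ℝ × ℝ,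
        ENNReal.ofReal (w.1 * 0 + w.2 * 0 -
          ∫ p : ℝ × ℝ, (Real.exp ((w.1 * p.2 + w.2) * K p.1) - 1) * f p.2))
      ≤ ⨆ w : ℝ × ℝ,
        ENNReal.ofReal (w.1 * s + w.2 * 0 -
          ∫ p : ℝ × ℝ, (Real.exp ((w.1 * p.2 + w.2) * K p.1) - 1) * f p.2) := by
  obtain rfl : K = fun z => D.indicator (fun _ => (1 : ℝ)) z - D'.indicator (fun _ => 1) z :=
    funext hK
  obtain ⟨M, hM⟩ : ∃ M : ℝ → ℝ, ∀ u, M u = ∫ y, exp (u * y) * f y := ⟨_, fun _ => rfl⟩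
  simp only [← hM]
  set lam := (volume D).toReal
  set lam' := (volume D').toReal
  have hΨ : ∀ u v, ∫ p : ℝ × ℝ, (exp ((u * p.2 + v) * (D.indicator (fun _ => (1 : ℝ)) p.1
        - D'.indicator (fun _ => 1) p.1)) - 1) * f p.2
      = lam * M u * exp v + lam' * M (-u) * exp (-v) - lam - lam' := fun u v => by
    rw [Measure.volume_eq_prod, integral_prod_exp_mul_indicator_sub_indicator hD hD'
      (Set.disjoint_iff_inter_eq_empty.2 hdisj) hDfin hD'fin (by simpa using hMint 0)
      (hMint u) (hMint (-u)), hprob, ← hM, ← hM]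
    ring
  have hpos : ∀ u, 0 < lam * M u := fun u => mul_pos (by linarith) (hM u ▸ hMpos u)
  have hpos' : ∀ u, 0 < lam' * M (-u) := fun u => mul_pos hD'pos (hM (-u) ▸ hMpos (-u))
  have hattain : ∀ u, lam * M u * exp (log √(lam' * M (-u) / (lam * M u)))
      + lam' * M (-u) * exp (-log √(lam' * M (-u) / (lam * M u)))
      = 2 * √(lam * M u * (lam' * M (-u))) := fun u =>
    mul_exp_log_sqrt_div_add_mul_exp_neg (hpos u) (hpos' u)
  have hsymm : ∀ u, √(lam * M (-u) * (lam' * M u)) = √(lam * M u * (lam' * M (-u))) :=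
    fun u => by ring_nf
  refine ⟨fun u => ?_, fun s => ?_⟩
  · have hattain_neg := hattain (-u)
    rw [neg_neg] at hattain_neg
    rw [hΨ, hΨ, neg_neg, hattain, hattain_neg, hsymm]
  · refine fenchelLegendre_zero_le_of_even
      (Ψ := fun w => ∫ p : ℝ × ℝ, (exp ((w.1 * p.2 + w.2) * (D.indicator (fun _ => (1 : ℝ)) p.1
        - D'.indicator (fun _ => 1) p.1)) - 1) * f p.2)
      (g := fun u => 2 * √(lam * M u * (lam' * M (-u))) - lam - lam')
      (fun u => by simp only [neg_neg, hsymm]) (fun w => ?_)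
      (fun u => ⟨log √(lam' * M (-u) / (lam * M u)), by simp only [hΨ, hattain]⟩) s
    simp only [hΨ]
    linarith [two_mul_sqrt_mul_le_mul_exp_add_mul_exp_neg (hpos w.1).le (hpos' w.1).le w.2]

/-- With `K = 1_D - 1_{D'}`, the function `u ↦ inf_v Ψ_x(u,v)` is even (its value at the
minimizer `v₀(u)` agrees at `u` and `-u`), and consequently Condition (C) holds:
`I_x(s,0) ≥ I_x(0,0)` for all `s`. -/
theorem stmt10 (D D' : Set ℝ)
    (hD : MeasurableSet D) (hD' : MeasurableSet D')
    (hdisj : D ∩ D' = ∅)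
    (hDfin : volume D ≠ ⊤) (hD'fin : volume D' ≠ ⊤)
    (hmeas1 : (volume D).toReal - (volume D').toReal = 1)
    (hD'pos : 0 < (volume D').toReal)
    (K : ℝ → ℝ)
    (hK : ∀ z, K z = D.indicator (fun _ => (1 : ℝ)) z - D'.indicator (fun _ => (1 : ℝ)) z)
    (f : ℝ → ℝ) (hfnn : ∀ y, 0 ≤ f y) (hfmeas : Measurable f)
    (hprob : ∫ y, f y = 1)
    (hMint : ∀ u : ℝ, Integrable (fun y => Real.exp (u * y) * f y))
    (hMpos : ∀ u : ℝ, 0 < ∫ y, Real.exp (u * y) * f y) :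
    (∀ u : ℝ,
      (∫ p : ℝ × ℝ,
          (Real.exp ((u * p.2 +
            Real.log (Real.sqrt ((volume D').toReal * (∫ y, Real.exp (-u * y) * f y)
              / ((volume D).toReal * ∫ y, Real.exp (u * y) * f y)))) * K p.1) - 1) * f p.2)
      = ∫ p : ℝ × ℝ,
          (Real.exp ((-u * p.2 +
            Real.log (Real.sqrt ((volume D').toReal * (∫ y, Real.exp (u * y) * f y)
              / ((volume D).toReal * ∫ y, Real.exp (-u * y) * f y)))) * K p.1) - 1) * f p.2)
    ∧ ∀ s : ℝ,
      (⨆ w : ℝ × ℝ,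
        ENNReal.ofReal (w.1 * 0 + w.2 * 0 -
          ∫ p : ℝ × ℝ, (Real.exp ((w.1 * p.2 + w.2) * K p.1) - 1) * f p.2))
      ≤ ⨆ w : ℝ × ℝ,
        ENNReal.ofReal (w.1 * s + w.2 * 0 -
          ∫ p : ℝ × ℝ, (Real.exp ((w.1 * p.2 + w.2) * K p.1) - 1) * f p.2) :=
  stmt10_general D D' hD hD' hdisj hDfin hD'fin hmeas1 hD'pos K hK f hprob hMint hMpos
end

section
/- Under Condition (C) (inf_s I_x(s,0) = I_x(0⃗,0)), for every α < I_x(0⃗,0) the level set {s ∈ ℝ^q : J(s) ≤ α} is compact, and for every α ≥ I_x(0⃗,0) the level set {J ≤ α} equals ℝ^q; in particular J is a rate function (lower semicontinuous). -/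
open MeasureTheory ENNReal

/-- Properties of `J(s) = inf_t I_x(st,t)` under Condition (C): for `α < I_x(0,0)` the level set
`{J ≤ α}` is compact; for `α ≥ I_x(0,0)` it is all of `ℝ^q`; in particular `J` is lower
semicontinuous (a rate function). -/
theorem stmt11 (q : ℕ)
    (I : EuclideanSpace ℝ (Fin q) × ℝ → ℝ≥0∞)
    (hlsc : LowerSemicontinuous I)
    (hgood : ∀ c : ℝ≥0∞, c ≠ ⊤ → IsCompact {p | I p ≤ c})
    (hconv : ∀ p p' : EuclideanSpace ℝ (Fin q) × ℝ, ∀ γ : ℝ, 0 ≤ γ → γ ≤ 1 →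
      I (γ • p + (1 - γ) • p') ≤ ENNReal.ofReal γ * I p + ENNReal.ofReal (1 - γ) * I p')
    (hC : ∀ s : EuclideanSpace ℝ (Fin q), I (0, 0) ≤ I (s, 0)) :
    (∀ α : ℝ≥0∞, α < I (0, 0) →
      IsCompact {s : EuclideanSpace ℝ (Fin q) | (⨅ t : ℝ, I (t • s, t)) ≤ α})
    ∧ (∀ α : ℝ≥0∞, I (0, 0) ≤ α →
      {s : EuclideanSpace ℝ (Fin q) | (⨅ t : ℝ, I (t • s, t)) ≤ α} = Set.univ)
    ∧ LowerSemicontinuous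
        (fun s : EuclideanSpace ℝ (Fin q) => ⨅ t : ℝ, I (t • s, t)) := by
  have hJle : ∀ s : EuclideanSpace ℝ (Fin q), (⨅ t : ℝ, I (t • s, t)) ≤ I (0, 0) := by
    intro s
    simpa using iInf_le (fun t : ℝ => I (t • s, t)) 0
  -- closedness of sublevel sets for α < I(0,0)
  have hclosed : ∀ α : ℝ≥0∞, α < I (0, 0) →
      IsClosed {s : EuclideanSpace ℝ (Fin q) | (⨅ t : ℝ, I (t • s, t)) ≤ α} := by
    intro α hα
    apply IsSeqClosed.isClosed
    intro u s hu hus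
    show (⨅ t : ℝ, I (t • s, t)) ≤ α
    refine le_of_forall_gt_imp_ge_of_dense fun α' hα' => ?_
    by_cases hα'c : α' < I (0, 0)
    · have hα'top : α' ≠ ⊤ := hα'c.ne_top
      have hK : IsCompact {p : EuclideanSpace ℝ (Fin q) × ℝ | I p ≤ α'} := hgood α' hα'top
      have hex : ∀ n : ℕ, ∃ t : ℝ, I (t • u n, t) ≤ α' := by
        intro n
        have h1 : (⨅ t : ℝ, I (t • u n, t)) < α' := lt_of_le_of_lt (hu n) hα'
        obtain ⟨t, ht⟩ := iInf_lt_iff.mp h1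
        exact ⟨t, ht.le⟩
      choose t ht using hex
      obtain ⟨x, hx, φ, hφ, hlim⟩ :=
        hK.tendsto_subseq (x := fun n => ((t n) • u n, t n)) ht
      have h2 : Filter.Tendsto (fun n => t (φ n)) Filter.atTop (nhds x.2) :=
        (continuous_snd.tendsto x).comp hlim
      have h1 : Filter.Tendsto (fun n => (t (φ n)) • u (φ n)) Filter.atTop (nhds x.1) :=
        (continuous_fst.tendsto x).comp hlim
      have hus' : Filter.Tendsto (fun n => u (φ n)) Filter.atTop (nhds s) :=
        hus.comp hφ.tendsto_atTop
      have h1' : Filter.Tendsto (fun n => (t (φ n)) • u (φ n)) Filter.atTop (nhds (x.2 • s)) :=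
        h2.smul hus'
      have hx1 : x.1 = x.2 • s := tendsto_nhds_unique h1 h1'
      calc (⨅ t : ℝ, I (t • s, t)) ≤ I (x.2 • s, x.2) := iInf_le _ x.2
        _ = I x := by rw [← hx1]
        _ ≤ α' := hx
    · exact (hJle s).trans (not_lt.mp hα'c)
  -- compactness of sublevel sets for α < I(0,0)
  have hcompact : ∀ α : ℝ≥0∞, α < I (0, 0) →
      IsCompact {s : EuclideanSpace ℝ (Fin q) | (⨅ t : ℝ, I (t • s, t)) ≤ α} := by
    intro α hα
    by_cases hne : {s : EuclideanSpace ℝ (Fin q) | (⨅ t : ℝ, I (t • s, t)) ≤ α}.Nonempty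
    · obtain ⟨α', hαα', hα'c⟩ := exists_between hα
      have hK : IsCompact {p : EuclideanSpace ℝ (Fin q) × ℝ | I p ≤ α'} :=
        hgood α' hα'c.ne_top
      -- for every s in the level set, there is a witness t with (t•s,t) ∈ K
      have hwit : ∀ s : EuclideanSpace ℝ (Fin q), (⨅ t : ℝ, I (t • s, t)) ≤ α →
          ∃ t : ℝ, I (t • s, t) ≤ α' := by
        intro s hs
        have h1 : (⨅ t : ℝ, I (t • s, t)) < α' := lt_of_le_of_lt hs hαα'
        obtain ⟨t, ht⟩ := iInf_lt_iff.mp h1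
        exact ⟨t, ht.le⟩
      obtain ⟨s₀, hs₀⟩ := hne
      obtain ⟨t₀, ht₀⟩ := hwit s₀ hs₀
      have hKne : {p : EuclideanSpace ℝ (Fin q) × ℝ | I p ≤ α'}.Nonempty :=
        ⟨(t₀ • s₀, t₀), ht₀⟩
      -- minimum of |p.2| over K is positive
      obtain ⟨p₀, hp₀, hmin'⟩ := hK.exists_isMinOn hKne
        ((continuous_abs.comp continuous_snd).continuousOn)
      have hmin : ∀ p ∈ {p : EuclideanSpace ℝ (Fin q) × ℝ | I p ≤ α'}, |p₀.2| ≤ |p.2| :=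
        fun p hp => hmin' hp
      have hδpos : 0 < |p₀.2| := by
        apply abs_pos.mpr
        intro h0
        have heq : ((p₀.1, (0 : ℝ)) : EuclideanSpace ℝ (Fin q) × ℝ) = p₀ := by
          rw [← h0]
        have : I (0, 0) ≤ I p₀ := by
          rw [← heq]; exact hC p₀.1
        exact absurd (lt_of_le_of_lt (this.trans hp₀) hα'c) (lt_irrefl _)
      -- bound on K
      obtain ⟨R, hR⟩ := hK.isBounded.subset_closedBall 0
      refine Metric.isCompact_of_isClosed_isBounded (hclosed α hα) ?_
      have hsub : {s : EuclideanSpace ℝ (Fin q) | (⨅ t : ℝ, I (t • s, t)) ≤ α} ⊆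
          Metric.closedBall 0 (R / |p₀.2|) := by
        intro s hs
        obtain ⟨t, ht⟩ := hwit s hs
        have hmem : ((t • s, t) : EuclideanSpace ℝ (Fin q) × ℝ) ∈
            {p : EuclideanSpace ℝ (Fin q) × ℝ | I p ≤ α'} := ht
        have hδt : |p₀.2| ≤ |t| := hmin _ hmem
        have hnorm : ‖((t • s, t) : EuclideanSpace ℝ (Fin q) × ℝ)‖ ≤ R := by
          have := hR hmem
          simpa [Metric.mem_closedBall, dist_zero_right] using this
        have hts : ‖t • s‖ ≤ R :=
          le_trans (norm_fst_le ((t • s, t) : EuclideanSpace ℝ (Fin q) × ℝ)) hnorm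
        rw [norm_smul, Real.norm_eq_abs] at hts
        rw [Metric.mem_closedBall, dist_zero_right]
        rw [le_div_iff₀ hδpos]
        have h1 : ‖s‖ * |p₀.2| ≤ |t| * ‖s‖ := by
          have := norm_nonneg s
          nlinarith
        linarith
      exact Metric.isBounded_closedBall.subset hsub
    · rw [Set.not_nonempty_iff_eq_empty] at hne
      rw [hne]
      exact isCompact_empty
  -- level sets for α ≥ I(0,0)
  have huniv : ∀ α : ℝ≥0∞, I (0, 0) ≤ α →
      {s : EuclideanSpace ℝ (Fin q) | (⨅ t : ℝ, I (t • s, t)) ≤ α} = Set.univ := by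
    intro α hα
    ext s
    simp only [Set.mem_setOf_eq, Set.mem_univ, iff_true]
    exact (hJle s).trans hα
  refine ⟨hcompact, huniv, ?_⟩
  rw [lowerSemicontinuous_iff_isOpen_preimage]
  intro y
  have hpre : (fun s : EuclideanSpace ℝ (Fin q) => ⨅ t : ℝ, I (t • s, t)) ⁻¹' Set.Ioi y =
      {s : EuclideanSpace ℝ (Fin q) | (⨅ t : ℝ, I (t • s, t)) ≤ y}ᶜ := by
    ext s
    simp [not_le]
  rw [hpre]
  by_cases hy : y < I (0, 0)
  · exact ((hcompact y hy).isClosed).isOpen_compl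
  · rw [huniv y (not_lt.mp hy)]
    simp
end

section
/- Let G ⊂ ℝ^q × ℝ be compact with G ∩ (ℝ^q × {0}) = ∅, and let F(s,t) = (st, t). Then F⁻¹(G) is a compact subset of ℝ^q × ℝ. -/
/-- If `G ⊂ ℝ^q × ℝ` is compact and disjoint from the hyperplane `{t = 0}`, then the preimage
of `G` under `F(s,t) = (st, t)` is compact. -/
theorem stmt14 (q : ℕ)
    (G : Set ((Fin q → ℝ) × ℝ))
    (hG : IsCompact G)
    (hG0 : G ∩ {p : (Fin q → ℝ) × ℝ | p.2 = 0} = ∅) :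
    IsCompact ((fun p : (Fin q → ℝ) × ℝ => (p.2 • p.1, p.2)) ⁻¹' G) := by
  have hne : ∀ p ∈ G, p.2 ≠ 0 := by
    intro p hp h0
    have : p ∈ G ∩ {p : (Fin q → ℝ) × ℝ | p.2 = 0} := ⟨hp, h0⟩
    rw [hG0] at this
    exact this
  have himg : (fun p : (Fin q → ℝ) × ℝ => (p.2 • p.1, p.2)) ⁻¹' G
      = (fun p : (Fin q → ℝ) × ℝ => (p.2⁻¹ • p.1, p.2)) '' G := by
    ext ⟨s, t⟩
    constructor
    · intro h
      have ht : t ≠ 0 := hne _ h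
      exact ⟨(t • s, t), h, by simp [smul_smul, inv_mul_cancel₀ ht]⟩
    · rintro ⟨⟨u, t⟩, hu, huv⟩
      have ht : t ≠ 0 := hne _ hu
      simp only [Prod.mk.injEq] at huv
      obtain ⟨h1, h2⟩ := huv
      subst h2
      simp only [Set.mem_preimage, ← h1, smul_smul, mul_inv_cancel₀ ht, one_smul]
      exact hu
  rw [himg]
  apply hG.image_of_continuousOn
  apply ContinuousOn.prodMk
  · exact ContinuousOn.smul (ContinuousOn.inv₀ continuousOn_snd (fun p hp => hne p hp))
      continuousOn_fst
  · exact continuousOn_snd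
end

section
/- If K is nonnegative (λ(S₋)=0), then for the recursive functional Ψ̃_{a,x}, one has lim_{v→−∞} Ψ̃_{a,x}(u,v) = −g(x)·λ(S₊)/(1−ad) for each u, and hence Ĩ_{a,x}(0⃗,0) = g(x)·λ(S₊)/(1−ad), and Ĩ_{a,x}(t₁,0) = +∞ for t₁ ≠ 0⃗. -/
open MeasureTheory Real Filter ENNReal Set Topology

/-!
As `v → -∞` the integrand `(exp (s^{ad} (⟨u, y⟩ + v) K z) - 1) f(y)` tends to `-1_{S₊}(z) f(y)`,
and for `v ≤ 0` it is dominated by `1_{S₊}(z) e^{M |⟨u, y⟩|} f(y)`, where `M` bounds `K`; this is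
integrable thanks to the exponential moments of `f`. Dominated convergence in `(z, y)`, and then in
`s` against the weight `s^{-ad}`, whose integral over `(0, 1]` is `1 / (1 - ad)`, gives the limit
`-g λ(S₊) / (1 - ad)`. As `exp > 0`, this limit is also a lower bound of `Ψ̃` everywhere, which
identifies `Ĩ(0, 0)`. For `t ≠ 0`, the choice `u = c t` with `c` large and `v` very negative makes
`⟨u, t⟩ - Ψ̃(u, v)` arbitrarily large.
-/

theorem abs_exp_sub_one_le_exp {t B : ℝ} (htB : t ≤ B) (hB : 0 ≤ B) : |exp t - 1| ≤ exp B := by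
  rw [abs_le]
  constructor <;> linarith [exp_le_exp.2 htB, one_le_exp hB, exp_pos t]

theorem mul_add_mul_le_mul_abs_add_mul_max {c k M t v : ℝ} (hc0 : 0 ≤ c) (hc1 : c ≤ 1)
    (hk0 : 0 ≤ k) (hkM : k ≤ M) : c * (t + v) * k ≤ M * |t| + M * max v 0 := by
  have h1 : c * (t + v) ≤ max (t + v) 0 := by
    rcases le_total 0 (t + v) with h | h
    · nlinarith [le_max_left (t + v) 0]
    · nlinarith [le_max_right (t + v) 0]
  have h2 : max (t + v) 0 ≤ |t| + max v 0 :=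
    max_le (add_le_add (le_abs_self t) (le_max_left v 0)) (by positivity)
  calc c * (t + v) * k ≤ max (t + v) 0 * k := mul_le_mul_of_nonneg_right h1 hk0
    _ ≤ max (t + v) 0 * M := mul_le_mul_of_nonneg_left hkM (le_max_right _ _)
    _ ≤ (|t| + max v 0) * M := mul_le_mul_of_nonneg_right h2 (hk0.trans hkM)
    _ = M * |t| + M * max v 0 := by ring

theorem abs_exp_mul_add_mul_sub_one_le {c k M t v : ℝ} (hc0 : 0 ≤ c) (hc1 : c ≤ 1)
    (hk0 : 0 ≤ k) (hkM : k ≤ M) :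
    |exp (c * (t + v) * k) - 1| ≤ exp (M * max v 0) * exp (M * |t|) := by
  have hM : 0 ≤ M := hk0.trans hkM
  rw [← exp_add, add_comm (M * max v 0)]
  exact abs_exp_sub_one_le_exp (mul_add_mul_le_mul_abs_add_mul_max hc0 hc1 hk0 hkM)
    (by positivity)

theorem tendsto_exp_mul_add_mul_atBot {c k : ℝ} (hc : 0 < c) (hk : 0 < k) (t : ℝ) :
    Tendsto (fun v => exp (c * (t + v) * k)) atBot (𝓝 0) :=
  tendsto_exp_atBot.comp
    (((tendsto_atBot_add_const_left _ t tendsto_id).const_mul_atBot hc).atBot_mul_const hk)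

theorem norm_exp_kernel_integrand_le {Z Y : Type*} {K : Z → ℝ} {φ f : Y → ℝ} {M c v : ℝ}
    (hK0 : ∀ z, 0 ≤ K z) (hKM : ∀ z, K z ≤ M)
    (hf0 : ∀ y, 0 ≤ f y) (hc0 : 0 ≤ c) (hc1 : c ≤ 1) (p : Z × Y) :
    ‖(exp (c * (φ p.2 + v) * K p.1) - 1) * f p.2‖ ≤
      {z | 0 < K z}.indicator 1 p.1 * (exp (M * max v 0) * (exp (M * |φ p.2|) * f p.2)) := by
  obtain ⟨z, y⟩ := p
  rcases (hK0 z).eq_or_lt with hz | hz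
  · simp [← hz]
  · rw [indicator_of_mem (s := {z | 0 < K z}) hz, Pi.one_apply, one_mul, norm_mul, norm_eq_abs,
      norm_of_nonneg (hf0 y), ← mul_assoc]
    exact mul_le_mul_of_nonneg_right (abs_exp_mul_add_mul_sub_one_le hc0 hc1 hz.le (hKM z))
      (hf0 y)

section ProdIntegral

variable {Z Y : Type*} [MeasurableSpace Z] [MeasurableSpace Y] {μ : Measure Z} {ν : Measure Y}
  {S : Set Z}

theorem integrable_indicator_one_mul_prod (hS : MeasurableSet S) (hμS : μ S ≠ ⊤) {g : Y → ℝ}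
    (hg : Integrable g ν) :
    Integrable (fun p : Z × Y => S.indicator 1 p.1 * g p.2) (μ.prod ν) :=
  ((integrable_indicator_iff hS).2 (integrableOn_const hμS)).mul_prod hg

theorem integral_indicator_one_mul_prod [SFinite μ] [SFinite ν] (hS : MeasurableSet S) (g : Y → ℝ) :
    ∫ p, S.indicator 1 p.1 * g p.2 ∂μ.prod ν = μ.real S * ∫ y, g y ∂ν := by
  rw [integral_prod_mul, integral_indicator_one hS]

variable {K : Z → ℝ} {φ f : Y → ℝ} {M : ℝ}

theorem measurable_exp_kernel_integrand (hK : Measurable K) (hφ : Measurable φ)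
    (hf : Measurable f) (c v : ℝ) :
    Measurable fun p : Z × Y => (exp (c * (φ p.2 + v) * K p.1) - 1) * f p.2 := by
  fun_prop

theorem norm_integral_exp_kernel_le [SFinite μ] [SFinite ν] {c v : ℝ} (hK : Measurable K)
    (hK0 : ∀ z, 0 ≤ K z) (hKM : ∀ z, K z ≤ M) (hS : μ {z | 0 < K z} ≠ ⊤)
    (hf0 : ∀ y, 0 ≤ f y) (hexp : Integrable (fun y => exp (M * |φ y|) * f y) ν)
    (hc0 : 0 ≤ c) (hc1 : c ≤ 1) (hv : v ≤ 0) :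
    ‖∫ p, (exp (c * (φ p.2 + v) * K p.1) - 1) * f p.2 ∂μ.prod ν‖ ≤
      μ.real {z | 0 < K z} * ∫ y, exp (M * |φ y|) * f y ∂ν := by
  have hSmeas : MeasurableSet {z | 0 < K z} := measurableSet_lt measurable_const hK
  rw [← integral_indicator_one_mul_prod hSmeas]
  refine norm_integral_le_of_norm_le (integrable_indicator_one_mul_prod hSmeas hS hexp)
    (ae_of_all _ fun p => ?_)
  simpa [max_eq_right hv] using norm_exp_kernel_integrand_le (φ := φ) (v := v) hK0 hKM hf0 hc0 hc1 p

theorem neg_measureReal_mul_integral_le_integral_exp_kernel [SFinite μ] [SFinite ν] {c : ℝ}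
    (hK : Measurable K) (hK0 : ∀ z, 0 ≤ K z) (hKM : ∀ z, K z ≤ M) (hS : μ {z | 0 < K z} ≠ ⊤)
    (hφ : Measurable φ) (hf : Measurable f) (hf0 : ∀ y, 0 ≤ f y) (hfi : Integrable f ν)
    (hexp : Integrable (fun y => exp (M * |φ y|) * f y) ν) (hc0 : 0 ≤ c) (hc1 : c ≤ 1) (v : ℝ) :
    -(μ.real {z | 0 < K z} * ∫ y, f y ∂ν) ≤
      ∫ p, (exp (c * (φ p.2 + v) * K p.1) - 1) * f p.2 ∂μ.prod ν := by
  have hSmeas : MeasurableSet {z | 0 < K z} := measurableSet_lt measurable_const hK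
  have hint : Integrable (fun p : Z × Y => (exp (c * (φ p.2 + v) * K p.1) - 1) * f p.2)
      (μ.prod ν) :=
    (integrable_indicator_one_mul_prod hSmeas hS (hexp.const_mul (exp (M * max v 0)))).mono'
      (measurable_exp_kernel_integrand hK hφ hf c v).aestronglyMeasurable
      (ae_of_all _ (norm_exp_kernel_integrand_le hK0 hKM hf0 hc0 hc1))
  rw [← integral_indicator_one_mul_prod hSmeas, ← integral_neg]
  refine integral_mono (integrable_indicator_one_mul_prod hSmeas hS hfi).neg hint ?_
  rintro ⟨z, y⟩
  rcases (hK0 z).eq_or_lt with hz | hz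
  · simp [← hz]
  · simp only [indicator_of_mem (s := {z | 0 < K z}) hz, Pi.one_apply, one_mul]
    nlinarith [exp_pos (c * (φ y + v) * K z), hf0 y]

theorem tendsto_integral_exp_kernel_atBot [SFinite μ] [SFinite ν] {c : ℝ}
    (hK : Measurable K) (hK0 : ∀ z, 0 ≤ K z) (hKM : ∀ z, K z ≤ M) (hS : μ {z | 0 < K z} ≠ ⊤)
    (hφ : Measurable φ) (hf : Measurable f) (hf0 : ∀ y, 0 ≤ f y)
    (hexp : Integrable (fun y => exp (M * |φ y|) * f y) ν) (hc0 : 0 < c) (hc1 : c ≤ 1) :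
    Tendsto (fun v => ∫ p, (exp (c * (φ p.2 + v) * K p.1) - 1) * f p.2 ∂μ.prod ν) atBot
      (𝓝 (-(μ.real {z | 0 < K z} * ∫ y, f y ∂ν))) := by
  have hSmeas : MeasurableSet {z | 0 < K z} := measurableSet_lt measurable_const hK
  have hlim : ∀ p : Z × Y, Tendsto (fun v => (exp (c * (φ p.2 + v) * K p.1) - 1) * f p.2)
      atBot (𝓝 (-({z | 0 < K z}.indicator 1 p.1 * f p.2))) := by
    rintro ⟨z, y⟩
    rcases (hK0 z).eq_or_lt with hz | hz
    · simp [← hz]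
    · simpa [indicator_of_mem (s := {z | 0 < K z}) hz] using
        ((tendsto_exp_mul_add_mul_atBot hc0 hz (φ y)).sub_const 1).mul_const (f y)
  rw [← integral_indicator_one_mul_prod hSmeas, ← integral_neg]
  refine tendsto_integral_filter_of_dominated_convergence _
    (Eventually.of_forall fun v =>
      (measurable_exp_kernel_integrand hK hφ hf c v).aestronglyMeasurable)
    ?_ (integrable_indicator_one_mul_prod hSmeas hS hexp) (ae_of_all _ hlim)
  filter_upwards [eventually_le_atBot 0] with v hv
  refine ae_of_all _ fun p => ?_
  simpa [max_eq_right hv] using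
    norm_exp_kernel_integrand_le (φ := φ) (v := v) hK0 hKM hf0 hc0.le hc1 p

end ProdIntegral

theorem tendsto_integral_mul_of_tendsto_of_norm_le {α ι : Type*} [MeasurableSpace α]
    {μ : Measure α} {l : Filter ι} [l.IsCountablyGenerated] {w : α → ℝ} {F : ι → α → ℝ}
    {L C : ℝ} (hw : Integrable w μ)
    (hmeas : ∀ᶠ i in l, AEStronglyMeasurable (fun s => w s * F i s) μ)
    (hbound : ∀ᶠ i in l, ∀ᵐ s ∂μ, ‖F i s‖ ≤ C)
    (hlim : ∀ᵐ s ∂μ, Tendsto (fun i => F i s) l (𝓝 L)) :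
    Tendsto (fun i => ∫ s, w s * F i s ∂μ) l (𝓝 ((∫ s, w s ∂μ) * L)) := by
  rw [← integral_mul_const]
  refine tendsto_integral_filter_of_dominated_convergence (fun s => ‖w s‖ * C) hmeas ?_
    (hw.norm.mul_const C) (hlim.mono fun s hs => hs.const_mul (w s))
  filter_upwards [hbound] with i hi
  filter_upwards [hi] with s hs
  rw [norm_mul]
  exact mul_le_mul_of_nonneg_left hs (norm_nonneg _)

theorem integrableOn_Ioc_zero_one_rpow_neg {r : ℝ} (hr : r < 1) :
    IntegrableOn (fun s : ℝ => s ^ (-r)) (Ioc 0 1) :=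
  (intervalIntegral.intervalIntegrable_rpow' (by linarith)).1

theorem integral_Ioc_zero_one_rpow_neg {r : ℝ} (hr : r < 1) :
    ∫ s in Ioc (0 : ℝ) 1, s ^ (-r) = (1 - r)⁻¹ := by
  rw [← intervalIntegral.integral_of_le zero_le_one, integral_rpow (Or.inl (by linarith)),
    Real.one_rpow, Real.zero_rpow (by linarith)]
  ring

theorem iSup_ofReal_neg_eq_ofReal {ι ι' : Type*} {Ψ : ι → ℝ} {A : ℝ} {l : Filter ι'} [l.NeBot]
    {e : ι' → ι} (hle : ∀ i, -A ≤ Ψ i) (hlim : Tendsto (Ψ ∘ e) l (𝓝 (-A))) :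
    ⨆ i, ENNReal.ofReal (-Ψ i) = ENNReal.ofReal A := by
  refine le_antisymm (iSup_le fun i => ofReal_le_ofReal (by linarith [hle i])) ?_
  have h := (ENNReal.continuous_ofReal.tendsto _).comp hlim.neg
  rw [neg_neg] at h
  exact le_of_tendsto' h fun j => le_iSup (fun i => ENNReal.ofReal (-Ψ i)) (e j)

theorem iSup_ofReal_inner_sub_eq_top {E ι : Type*} [NormedAddCommGroup E] [InnerProductSpace ℝ E]
    {Ψ : E → ι → ℝ} {C : ℝ} (hΨ : ∀ u, ∃ i, Ψ u i ≤ C) {t : E} (ht : t ≠ 0) :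
    ⨆ w : E × ι, ENNReal.ofReal (inner ℝ w.1 t - Ψ w.1 w.2) = ⊤ := by
  have ht2 : ‖t‖ ^ 2 ≠ 0 := by have := norm_pos_iff.2 ht; positivity
  refine iSup_eq_top.2 fun b hb => ?_
  obtain ⟨i, hi⟩ := hΨ (((b.toReal + C + 1) / ‖t‖ ^ 2) • t)
  refine ⟨(((b.toReal + C + 1) / ‖t‖ ^ 2) • t, i), ?_⟩
  rw [lt_ofReal_iff_toReal_lt hb.ne, real_inner_smul_left, real_inner_self_eq_norm_sq,
    div_mul_cancel₀ _ ht2]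
  linarith

section TildePsi

variable {Z E : Type*} [MeasurableSpace Z] [NormedAddCommGroup E] [InnerProductSpace ℝ E]
  [MeasurableSpace E] [BorelSpace E] {μ : Measure Z} {ν : Measure E} [SFinite μ] [SFinite ν]
  {K : Z → ℝ} {f : E → ℝ} {M r : ℝ}

/-- The functional `Ψ̃_{a,x}(u, v)` of the paper, with `r = a d` and `f = f(x, ·)`. -/
noncomputable def tildePsi (μ : Measure Z) (ν : Measure E) (K : Z → ℝ) (f : E → ℝ) (r : ℝ)
    (u : E) (v : ℝ) : ℝ :=
  ∫ s in Ioc 0 1, s ^ (-r) *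
    ∫ p, (exp (s ^ r * (inner ℝ u p.2 + v) * K p.1) - 1) * f p.2 ∂μ.prod ν

theorem tendsto_tildePsi_atBot (hr0 : 0 ≤ r) (hr1 : r < 1) (hK : Measurable K)
    (hK0 : ∀ z, 0 ≤ K z) (hKM : ∀ z, K z ≤ M) (hS : μ {z | 0 < K z} ≠ ⊤) (hf : Measurable f)
    (hf0 : ∀ y, 0 ≤ f y) {u : E} (hexp : Integrable (fun y => exp (M * |inner ℝ u y|) * f y) ν)
    (hint : ∀ v, IntegrableOn (fun s : ℝ => s ^ (-r) *
      ∫ p, (exp (s ^ r * (inner ℝ u p.2 + v) * K p.1) - 1) * f p.2 ∂μ.prod ν) (Ioc 0 1)) :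
    Tendsto (fun v => tildePsi μ ν K f r u v) atBot
      (𝓝 (-((∫ y, f y ∂ν) * μ.real {z | 0 < K z} / (1 - r)))) := by
  have hφ : Measurable fun y => inner ℝ u y := (continuous_const.inner continuous_id).measurable
  have h : Tendsto (fun v => tildePsi μ ν K f r u v) atBot
      (𝓝 ((∫ s in Ioc (0 : ℝ) 1, s ^ (-r)) * -(μ.real {z | 0 < K z} * ∫ y, f y ∂ν))) :=
    tendsto_integral_mul_of_tendsto_of_norm_le
      (C := μ.real {z | 0 < K z} * ∫ y, exp (M * |inner ℝ u y|) * f y ∂ν)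
      (integrableOn_Ioc_zero_one_rpow_neg hr1)
      (Eventually.of_forall fun v => (hint v).aestronglyMeasurable) ?_ ?_
  · rw [integral_Ioc_zero_one_rpow_neg hr1] at h
    convert h using 2
    ring
  · filter_upwards [eventually_le_atBot 0] with v hv
    rw [ae_restrict_iff' measurableSet_Ioc]
    exact ae_of_all _ fun s hs => norm_integral_exp_kernel_le hK hK0 hKM hS hf0 hexp
      (rpow_nonneg hs.1.le r) (rpow_le_one hs.1.le hs.2 hr0) hv
  · rw [ae_restrict_iff' measurableSet_Ioc]
    exact ae_of_all _ fun s hs => tendsto_integral_exp_kernel_atBot hK hK0 hKM hS hφ hf hf0 hexp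
      (rpow_pos_of_pos hs.1 r) (rpow_le_one hs.1.le hs.2 hr0)

theorem neg_div_le_tildePsi (hr0 : 0 ≤ r) (hr1 : r < 1) (hK : Measurable K)
    (hK0 : ∀ z, 0 ≤ K z) (hKM : ∀ z, K z ≤ M) (hS : μ {z | 0 < K z} ≠ ⊤) (hf : Measurable f)
    (hf0 : ∀ y, 0 ≤ f y) (hfi : Integrable f ν) {u : E}
    (hexp : Integrable (fun y => exp (M * |inner ℝ u y|) * f y) ν) {v : ℝ}
    (hint : IntegrableOn (fun s : ℝ => s ^ (-r) *
      ∫ p, (exp (s ^ r * (inner ℝ u p.2 + v) * K p.1) - 1) * f p.2 ∂μ.prod ν) (Ioc 0 1)) :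
    -((∫ y, f y ∂ν) * μ.real {z | 0 < K z} / (1 - r)) ≤ tildePsi μ ν K f r u v := by
  have hφ : Measurable fun y => inner ℝ u y := (continuous_const.inner continuous_id).measurable
  have h := setIntegral_mono_on
    ((integrableOn_Ioc_zero_one_rpow_neg hr1).mul_const (-(μ.real {z | 0 < K z} * ∫ y, f y ∂ν)))
    hint measurableSet_Ioc fun s hs => mul_le_mul_of_nonneg_left
      (neg_measureReal_mul_integral_le_integral_exp_kernel hK hK0 hKM hS hφ hf hf0 hfi hexp
        (rpow_nonneg hs.1.le r) (rpow_le_one hs.1.le hs.2 hr0) v) (rpow_nonneg hs.1.le _)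
  rw [integral_mul_const, integral_Ioc_zero_one_rpow_neg hr1] at h
  calc -((∫ y, f y ∂ν) * μ.real {z | 0 < K z} / (1 - r))
      = (1 - r)⁻¹ * -(μ.real {z | 0 < K z} * ∫ y, f y ∂ν) := by ring
    _ ≤ tildePsi μ ν K f r u v := h

end TildePsi

theorem Integrable.exp_mul_abs_inner_mul {E : Type*} [NormedAddCommGroup E]
    [InnerProductSpace ℝ E] [MeasurableSpace E] [BorelSpace E] {ν : Measure E} {f : E → ℝ}
    (hf : Measurable f) (hf0 : ∀ y, 0 ≤ f y) {M : ℝ} (hM : 0 ≤ M) {u : E}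
    (h : Integrable (fun y => exp (M * ‖u‖ * ‖y‖) * f y) ν) :
    Integrable (fun y => exp (M * |inner ℝ u y|) * f y) ν := by
  refine h.mono' (by fun_prop) (ae_of_all _ fun y => ?_)
  rw [norm_mul, norm_of_nonneg (exp_pos _).le, norm_of_nonneg (hf0 y), mul_assoc M]
  exact mul_le_mul_of_nonneg_right
    (exp_le_exp.2 (mul_le_mul_of_nonneg_left (abs_real_inner_le_norm u y) hM)) (hf0 y)

theorem stmt17_general (d q : ℕ) (a : ℝ) (had : 0 < a * d) (had1 : a * d < 1)
    (K : EuclideanSpace ℝ (Fin d) → ℝ)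
    (f : EuclideanSpace ℝ (Fin d) → EuclideanSpace ℝ (Fin q) → ℝ)
    (x : EuclideanSpace ℝ (Fin d))
    (hKmeas : Measurable K) (hKbdd : ∃ M : ℝ, ∀ z, |K z| ≤ M)
    (hKnn : ∀ z, 0 ≤ K z)
    (hSfin : volume {z | 0 < K z} ≠ ⊤)
    (hfmeas : Measurable (f x)) (hfnn : ∀ y, 0 ≤ f x y)
    (hmom : ∀ (m ρ : ℝ), 0 ≤ m → 0 ≤ ρ →
      Integrable (fun y : EuclideanSpace ℝ (Fin q) =>
        ‖y‖ ^ m * Real.exp (ρ * ‖y‖) * f x y))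
    (hint : ∀ (u : EuclideanSpace ℝ (Fin q)) (v : ℝ),
      IntegrableOn (fun s : ℝ => s ^ (-(a * d)) *
        ∫ p : EuclideanSpace ℝ (Fin d) × EuclideanSpace ℝ (Fin q),
          (Real.exp (s ^ (a * d) * ((inner ℝ u p.2 : ℝ) + v) * K p.1) - 1) * f x p.2)
        (Set.Ioc (0:ℝ) 1))
    (g : ℝ) (hg : g = ∫ y, f x y) :
    (∀ u : EuclideanSpace ℝ (Fin q),
      Tendsto (fun v : ℝ =>
          ∫ s in Set.Ioc (0:ℝ) 1, s ^ (-(a * d)) *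
            ∫ p : EuclideanSpace ℝ (Fin d) × EuclideanSpace ℝ (Fin q),
              (Real.exp (s ^ (a * d) * ((inner ℝ u p.2 : ℝ) + v) * K p.1) - 1) * f x p.2)
        atBot (nhds (-(g * (volume {z | 0 < K z}).toReal / (1 - a * d)))))
    ∧ (⨆ w : EuclideanSpace ℝ (Fin q) × ℝ,
        ENNReal.ofReal ((inner ℝ w.1 (0 : EuclideanSpace ℝ (Fin q)) : ℝ) + w.2 * 0 -
          ∫ s in Set.Ioc (0:ℝ) 1, s ^ (-(a * d)) *
            ∫ p : EuclideanSpace ℝ (Fin d) × EuclideanSpace ℝ (Fin q),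
              (Real.exp (s ^ (a * d) * ((inner ℝ w.1 p.2 : ℝ) + w.2) * K p.1) - 1) * f x p.2))
        = ENNReal.ofReal (g * (volume {z | 0 < K z}).toReal / (1 - a * d))
    ∧ ∀ t₁ : EuclideanSpace ℝ (Fin q), t₁ ≠ 0 →
      (⨆ w : EuclideanSpace ℝ (Fin q) × ℝ,
        ENNReal.ofReal ((inner ℝ w.1 t₁ : ℝ) + w.2 * 0 -
          ∫ s in Set.Ioc (0:ℝ) 1, s ^ (-(a * d)) *
            ∫ p : EuclideanSpace ℝ (Fin d) × EuclideanSpace ℝ (Fin q),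
              (Real.exp (s ^ (a * d) * ((inner ℝ w.1 p.2 : ℝ) + w.2) * K p.1) - 1) * f x p.2))
        = ⊤ := by
  subst hg
  obtain ⟨M, hM⟩ := hKbdd
  have hKM : ∀ z, K z ≤ M := fun z => (le_abs_self _).trans (hM z)
  have hM0 : 0 ≤ M := (abs_nonneg _).trans (hM 0)
  have hfi : Integrable (f x) := by simpa using hmom 0 0 le_rfl le_rfl
  have hexp : ∀ u, Integrable (fun y => exp (M * |inner ℝ u y|) * f x y) :=
    fun u => Integrable.exp_mul_abs_inner_mul hfmeas hfnn hM0
      (by simpa [mul_assoc] using hmom 0 (M * ‖u‖) le_rfl (by positivity))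
  have htend (u) := tendsto_tildePsi_atBot (μ := volume) had.le had1 hKmeas hKnn hKM hSfin
    hfmeas hfnn (hexp u) (hint u)
  refine ⟨htend, ?_, fun t ht => ?_⟩
  · simp only [inner_zero_right, mul_zero, zero_add, zero_sub]
    exact iSup_ofReal_neg_eq_ofReal (e := fun v => (0, v))
      (fun w => neg_div_le_tildePsi had.le had1 hKmeas hKnn hKM hSfin hfmeas hfnn hfi (hexp w.1)
        (hint w.1 w.2)) (htend 0)
  · simp only [mul_zero, add_zero]
    exact iSup_ofReal_inner_sub_eq_top
      (fun u => ((htend u).eventually (gt_mem_nhds (lt_add_one _))).exists.imp fun _ => le_of_lt) ht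

/-- For a nonnegative kernel, the recursive functional satisfies
`lim_{v→-∞} Ψ̃_{a,x}(u,v) = -g(x)λ(S₊)/(1-ad)`, hence
`Ĩ_{a,x}(0,0) = g(x)λ(S₊)/(1-ad)` and `Ĩ_{a,x}(t₁,0) = ∞` for `t₁ ≠ 0`. -/
theorem stmt17 (d q : ℕ) (a : ℝ) (had : 0 < a * d) (had1 : a * d < 1)
    (K : EuclideanSpace ℝ (Fin d) → ℝ)
    (f : EuclideanSpace ℝ (Fin d) → EuclideanSpace ℝ (Fin q) → ℝ)
    (x : EuclideanSpace ℝ (Fin d))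
    (hKmeas : Measurable K) (hKbdd : ∃ M : ℝ, ∀ z, |K z| ≤ M)
    (hKint : Integrable K) (hK1 : ∫ z, K z = 1)
    (hKnn : ∀ z, 0 ≤ K z)
    (hSfin : volume {z | 0 < K z} ≠ ⊤)
    (hfmeas : Measurable (f x)) (hfnn : ∀ y, 0 ≤ f x y)
    (hfprob : ∫ y, f x y = 1)
    (hmom : ∀ (m ρ : ℝ), 0 ≤ m → 0 ≤ ρ →
      Integrable (fun y : EuclideanSpace ℝ (Fin q) =>
        ‖y‖ ^ m * Real.exp (ρ * ‖y‖) * f x y))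
    (hint : ∀ (u : EuclideanSpace ℝ (Fin q)) (v : ℝ),
      IntegrableOn (fun s : ℝ => s ^ (-(a * d)) *
        ∫ p : EuclideanSpace ℝ (Fin d) × EuclideanSpace ℝ (Fin q),
          (Real.exp (s ^ (a * d) * ((inner ℝ u p.2 : ℝ) + v) * K p.1) - 1) * f x p.2)
        (Set.Ioc (0:ℝ) 1))
    (g : ℝ) (hg : g = ∫ y, f x y) (hgpos : 0 < g) :
    (∀ u : EuclideanSpace ℝ (Fin q),
      Tendsto (fun v : ℝ =>
          ∫ s in Set.Ioc (0:ℝ) 1, s ^ (-(a * d)) *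
            ∫ p : EuclideanSpace ℝ (Fin d) × EuclideanSpace ℝ (Fin q),
              (Real.exp (s ^ (a * d) * ((inner ℝ u p.2 : ℝ) + v) * K p.1) - 1) * f x p.2)
        atBot (nhds (-(g * (volume {z | 0 < K z}).toReal / (1 - a * d)))))
    ∧ (⨆ w : EuclideanSpace ℝ (Fin q) × ℝ,
        ENNReal.ofReal ((inner ℝ w.1 (0 : EuclideanSpace ℝ (Fin q)) : ℝ) + w.2 * 0 -
          ∫ s in Set.Ioc (0:ℝ) 1, s ^ (-(a * d)) *
            ∫ p : EuclideanSpace ℝ (Fin d) × EuclideanSpace ℝ (Fin q),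
              (Real.exp (s ^ (a * d) * ((inner ℝ w.1 p.2 : ℝ) + w.2) * K p.1) - 1) * f x p.2))
        = ENNReal.ofReal (g * (volume {z | 0 < K z}).toReal / (1 - a * d))
    ∧ ∀ t₁ : EuclideanSpace ℝ (Fin q), t₁ ≠ 0 →
      (⨆ w : EuclideanSpace ℝ (Fin q) × ℝ,
        ENNReal.ofReal ((inner ℝ w.1 t₁ : ℝ) + w.2 * 0 -
          ∫ s in Set.Ioc (0:ℝ) 1, s ^ (-(a * d)) *
            ∫ p : EuclideanSpace ℝ (Fin d) × EuclideanSpace ℝ (Fin q),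
              (Real.exp (s ^ (a * d) * ((inner ℝ w.1 p.2 : ℝ) + w.2) * K p.1) - 1) * f x p.2))
        = ⊤ :=
  stmt17_general d q a had had1 K f x hKmeas hKbdd hKnn hSfin hfmeas hfnn hmom hint g hg
end
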